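/- arXiv:2411.18422 — 8 statements merged into one kernel-verified Lean document; each statement's English description precedes it below -/
import Mathlib

section
/- Let x₀ ∈ H and a ∈ ℝ^m with a_i ≥ 0 for all i. Assume that LP_w(F, F(w)) ≠ ∅ for every w ∈ L(F, F(x₀) + a). Then for every x ∈ L(F, F(x₀) + a) one has φ(x) = sup_{z ∈ LP_w(F, F(x₀) + a)} min_{i=1,…,m} (f_i(x) − f_i(z)), both suprema taken in the extended real numbers [−∞,+∞]. -/
open Filter Topology
open scoped NNReal

/-- If `LP_w(F, F(w)) ≠ ∅` for every `w ∈ L(F, F(x₀) + a)` (with `a ≥ 0`),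
then for every `x ∈ L(F, F(x₀) + a)` the merit function satisfies
`φ(x) = sup_{z ∈ LP_w(F, F(x₀) + a)} min_i (f_i(x) − f_i(z))`, suprema in the extended reals. -/
theorem stmt_1
    {H : Type*} [NormedAddCommGroup H] [InnerProductSpace ℝ H] [CompleteSpace H]
    {m : ℕ} (hm : 0 < m) (f : Fin m → H → ℝ)
    (hconv : ∀ i, ConvexOn ℝ Set.univ (f i))
    (hdiff : ∀ i, Differentiable ℝ (f i))
    (hlip : ∀ i, ∃ L : ℝ≥0, LipschitzWith L (gradient (f i)))
    (φ : H → EReal)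
    (hφ : ∀ x : H, φ x = ⨆ z : H, (((⨅ i, (f i x - f i z)) : ℝ) : EReal))
    (x₀ : H) (a : Fin m → ℝ) (ha : ∀ i, 0 ≤ a i)
    (hLP : ∀ w : H, (∀ i, f i w ≤ f i x₀ + a i) →
      ∃ z : H, (∀ i, f i z ≤ f i w) ∧ ¬ ∃ y : H, ∀ i, f i y < f i z) :
    ∀ x : H, (∀ i, f i x ≤ f i x₀ + a i) →
      φ x = ⨆ z : {z : H // (∀ i, f i z ≤ f i x₀ + a i) ∧ ¬ ∃ y : H, ∀ i, f i y < f i z},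
        (((⨅ i, (f i x - f i z.1)) : ℝ) : EReal) := by

  haveI : Nonempty (Fin m) := ⟨⟨0, hm⟩⟩
  intro x hx
  rw [hφ]
  apply le_antisymm
  · apply iSup_le
    intro z
    by_cases hc : (⨅ i, f i x - f i z) ≤ 0
    · obtain ⟨z₀, hz₀le, hz₀p⟩ := hLP x hx
      have hz₀L : ∀ i, f i z₀ ≤ f i x₀ + a i := fun i => (hz₀le i).trans (hx i)
      refine le_trans ?_ (le_iSup _ (⟨z₀, hz₀L, hz₀p⟩ :
        {z : H // (∀ i, f i z ≤ f i x₀ + a i) ∧ ¬ ∃ y : H, ∀ i, f i y < f i z}))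
      apply EReal.coe_le_coe_iff.mpr
      refine hc.trans (le_ciInf fun i => ?_)
      simpa using hz₀le i
    · push_neg at hc
      have hzle : ∀ i, f i z ≤ f i x := fun i => by
        have : (⨅ i, f i x - f i z) ≤ f i x - f i z :=
          ciInf_le (Finite.bddBelow_range fun i => f i x - f i z) i
        linarith
      have hzL : ∀ i, f i z ≤ f i x₀ + a i := fun i => (hzle i).trans (hx i)
      obtain ⟨z', hz'le, hz'p⟩ := hLP z hzL
      have hz'L : ∀ i, f i z' ≤ f i x₀ + a i := fun i => (hz'le i).trans (hzL i)
      refine le_trans ?_ (le_iSup _ (⟨z', hz'L, hz'p⟩ :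
        {z : H // (∀ i, f i z ≤ f i x₀ + a i) ∧ ¬ ∃ y : H, ∀ i, f i y < f i z}))
      apply EReal.coe_le_coe_iff.mpr
      refine le_ciInf fun i => ?_
      have h1 : (⨅ i, f i x - f i z) ≤ f i x - f i z :=
        ciInf_le (Finite.bddBelow_range fun i => f i x - f i z) i
      have := hz'le i
      linarith
  · apply iSup_le
    intro z
    exact le_iSup (fun w : H => (((⨅ i, (f i x - f i w)) : ℝ) : EReal)) z.1
end

section
/- Let c* ∈ ℝ^m and let (c^k) be a sequence in ℝ^m with c^k → c* as k → ∞. Let (x^k) be a sequence in H with x^k ∈ S(c^k) for all k, and suppose that x^k converges weakly to some x* ∈ H. Then x* ∈ S(c*). -/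
open Filter Topology
open scoped NNReal InnerProductSpace

/-!
For every index `i`, the gradient inequality of the convex function `f i` at `x*` gives
`f i x* + ⟪∇f i x*, x^k - x*⟫ ≤ f i (x^k) ≤ max_j (f j y - c^k_j) + c^k_i`. Weak convergence
kills the inner product in the limit, and the right-hand side converges because a finite maximum
is continuous, so `f i x* - c*_i ≤ max_j (f j y - c*_j)`.
-/

theorem ConvexOn.add_inner_le_of_hasGradientAt
    {H : Type*} [NormedAddCommGroup H] [InnerProductSpace ℝ H] [CompleteSpace H]
    {s : Set H} {f : H → ℝ} {g a b : H} (hf : ConvexOn ℝ s f) (ha : a ∈ s) (hb : b ∈ s)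
    (hg : HasGradientAt f g a) :
    f a + ⟪g, b - a⟫_ℝ ≤ f b := by
  let line : ℝ →ᵃ[ℝ] H := AffineMap.lineMap a b
  have hline : ConvexOn ℝ (line ⁻¹' s) (f ∘ line) := hf.comp_affineMap line
  have hderiv : HasDerivAt (f ∘ line) ⟪g, b - a⟫_ℝ 0 := by
    have hline' : HasDerivAt line (b - a) 0 := AffineMap.hasDerivAt_lineMap
    have hfa : HasFDerivAt f (InnerProductSpace.toDual ℝ H g) (line 0) := by
      simpa [line, hasGradientAt_iff_hasFDerivAt] using hg
    simpa using hfa.comp_hasDerivAt 0 hline'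
  have hslope := hline.le_slope_of_hasDerivAt (by simpa [line] using ha)
    (by simpa [line] using hb) one_pos hderiv
  simp only [slope_def_field, Function.comp_apply, AffineMap.lineMap_apply_one,
    AffineMap.lineMap_apply_zero, sub_zero, div_one, line] at hslope
  linarith

theorem ConvexOn.le_of_tendsto_of_weak_tendsto
    {H : Type*} [NormedAddCommGroup H] [InnerProductSpace ℝ H] [CompleteSpace H]
    {α : Type*} {l : Filter α} [l.NeBot] {f : H → ℝ} (hf : ConvexOn ℝ Set.univ f)
    {x : α → H} {xstar : H} (hdiff : DifferentiableAt ℝ f xstar)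
    (hweak : ∀ y : H, Tendsto (fun k => ⟪x k, y⟫_ℝ) l (𝓝 ⟪xstar, y⟫_ℝ))
    {u : α → ℝ} {u₀ : ℝ} (hu : Tendsto u l (𝓝 u₀)) (hle : ∀ᶠ k in l, f (x k) ≤ u k) :
    f xstar ≤ u₀ := by
  set g := gradient f xstar
  have hlower : ∀ k, f xstar + ⟪g, x k - xstar⟫_ℝ ≤ f (x k) := fun k =>
    hf.add_inner_le_of_hasGradientAt (Set.mem_univ _) (Set.mem_univ _) hdiff.hasGradientAt
  have hlim : Tendsto (fun k => f xstar + ⟪g, x k - xstar⟫_ℝ) l (𝓝 (f xstar)) := by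
    simp_rw [inner_sub_right, ← real_inner_comm g]
    simpa using tendsto_const_nhds.add ((hweak g).sub_const ⟪xstar, g⟫_ℝ)
  exact le_of_tendsto_of_tendsto hlim hu (hle.mono fun k hk => (hlower k).trans hk)

theorem Filter.Tendsto.ciSup_of_fintype
    {ι α L : Type*} [Fintype ι] [Nonempty ι] [ConditionallyCompleteLattice L]
    [TopologicalSpace L] [ContinuousSup L] {l : Filter α} {g : ι → α → L} {a : ι → L}
    (hg : ∀ i, Tendsto (g i) l (𝓝 (a i))) :
    Tendsto (fun k => ⨆ i, g i k) l (𝓝 (⨆ i, a i)) := by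
  have := Tendsto.finset_sup'_nhds_apply Finset.univ_nonempty fun i _ => hg i
  simpa only [Finset.sup'_univ_eq_ciSup] using this

theorem stmt_2_general
    {H : Type*} [NormedAddCommGroup H] [InnerProductSpace ℝ H] [CompleteSpace H]
    {m : ℕ} (f : Fin m → H → ℝ)
    (hconv : ∀ i, ConvexOn ℝ Set.univ (f i))
    (hdiff : ∀ i, Differentiable ℝ (f i))
    (c : ℕ → Fin m → ℝ) (cstar : Fin m → ℝ)
    (hc : Tendsto c atTop (𝓝 cstar))
    (x : ℕ → H) (xstar : H)
    (hx : ∀ k : ℕ, ∀ y : H, (⨆ i, (f i (x k) - c k i)) ≤ ⨆ i, (f i y - c k i))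
    (hweak : ∀ y : H, Tendsto (fun k => ⟪x k, y⟫_ℝ) atTop (𝓝 ⟪xstar, y⟫_ℝ)) :
    ∀ y : H, (⨆ i, (f i xstar - cstar i)) ≤ ⨆ i, (f i y - cstar i) := by
  intro y
  rcases isEmpty_or_nonempty (Fin m) with _ | _
  · simp -- both sides are the junk value `⨆ i : Fin 0, _ = 0`
  have hci : ∀ i, Tendsto (fun k => c k i) atTop (𝓝 (cstar i)) := fun i =>
    ((continuous_apply i).tendsto cstar).comp hc
  have hsup : Tendsto (fun k => ⨆ j, (f j y - c k j)) atTop (𝓝 (⨆ j, (f j y - cstar j))) :=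
    Tendsto.ciSup_of_fintype fun j => tendsto_const_nhds.sub (hci j)
  refine ciSup_le fun i => ?_
  have hle : ∀ k, f i (x k) ≤ (⨆ j, (f j y - c k j)) + c k i := fun k => by
    have := (le_ciSup (Finite.bddAbove_range fun j => f j (x k) - c k j) i).trans (hx k y)
    linarith
  have := (hconv i).le_of_tendsto_of_weak_tendsto (hdiff i xstar) hweak (hsup.add (hci i))
    (Eventually.of_forall hle)
  linarith

/-- If `c^k → c*`, `x^k ∈ S(c^k)` for all `k`, and `x^k` converges weakly to
`x*`, then `x* ∈ S(c*)`, where `S(c)` is the set of minimizers of `z ↦ max_i (f_i(z) − c_i)`. -/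
theorem stmt_2
    {H : Type*} [NormedAddCommGroup H] [InnerProductSpace ℝ H] [CompleteSpace H]
    {m : ℕ} (hm : 0 < m) (f : Fin m → H → ℝ)
    (hconv : ∀ i, ConvexOn ℝ Set.univ (f i))
    (hdiff : ∀ i, Differentiable ℝ (f i))
    (hlip : ∀ i, ∃ L : ℝ≥0, LipschitzWith L (gradient (f i)))
    (c : ℕ → Fin m → ℝ) (cstar : Fin m → ℝ)
    (hc : Tendsto c atTop (𝓝 cstar))
    (x : ℕ → H) (xstar : H)
    (hx : ∀ k : ℕ, ∀ y : H, (⨆ i, (f i (x k) - c k i)) ≤ ⨆ i, (f i y - c k i))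
    (hweak : ∀ y : H, Tendsto (fun k => ⟪x k, y⟫_ℝ) atTop (𝓝 ⟪xstar, y⟫_ℝ)) :
    ∀ y : H, (⨆ i, (f i xstar - cstar i)) ≤ ⨆ i, (f i y - cstar i) :=
  stmt_2_general f hconv hdiff c cstar hc x xstar hx hweak
end

section
/- Let t₀ > 0, β > 0 and p > 0. Assume S(c) ≠ ∅ for every c ∈ ℝ^m, and assume z₀ : ℝ^m → H is a continuous map such that for every c ∈ ℝ^m one has z₀(c) ∈ S(c) and ‖z₀(c)‖ ≤ ‖y‖ for every y ∈ S(c). Let w : [t₀,∞) → ℝ^m be continuous with w(t) → c* as t → ∞, and let z : [t₀,∞) → H be such that for every t ≥ t₀, z(t) minimizes u ↦ max_{i=1,…,m}(f_i(u) − w_i(t)) + (β/(2t^p))‖u‖² over H. Then z(t) converges strongly to z₀(c*), i.e. ‖z(t) − z₀(c*)‖ → 0 as t → ∞. -/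
/-!
Write `φ_c u = max_i (f_i u - c_i)`: `z t` minimizes `φ_{w t} + r_t ‖·‖²` with
`r_t = β / (2 t ^ p) → 0`. Strong convexity of `φ + r ‖·‖²` gives `‖y - v‖² ≤ 2 (‖y‖² - ‖v‖²)`
for its minimizer `v` and every `y` with `φ y ≤ φ v`. With `y = z₀ (w t)` this bounds
`‖z t‖ ≤ ‖z₀ (w t)‖` and reduces the theorem to `‖z t‖ → ‖z₀ c*‖`. For the lower bound: the
norm of the regularized minimizer decreases in `r` and, for fixed `φ`, increases to the norm of
the minimum-norm minimizer as `r ↓ 0` (Tikhonov); and for a fixed small `s`, the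
`s`-regularized minimizer of `φ_{w t}` tends to that of `φ_{c*}`, since the two objectives
differ by at most `‖w t - c*‖` everywhere.
-/

open Filter Topology Set
open scoped NNReal

section Regularization

variable {H : Type*} [NormedAddCommGroup H] [InnerProductSpace ℝ H]

def IsRegularizedMin (φ : H → ℝ) (r : ℝ) (v : H) : Prop :=
  ∀ u, φ v + r * ‖v‖ ^ 2 ≤ φ u + r * ‖u‖ ^ 2

variable {φ : H → ℝ} {r r' : ℝ} {v v' : H}

lemma sq_norm_midpoint (u u' : H) :
    ‖(2⁻¹ : ℝ) • u + (2⁻¹ : ℝ) • u'‖ ^ 2 = ‖u‖ ^ 2 / 2 + ‖u'‖ ^ 2 / 2 - ‖u - u'‖ ^ 2 / 4 := by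
  rw [← smul_add, norm_smul, mul_pow, Real.norm_of_nonneg (by norm_num)]
  linarith [parallelogram_law_with_norm ℝ u u']

lemma ConvexOn.add_mul_sq_norm_midpoint_le (hφ : ConvexOn ℝ univ φ) (r : ℝ) (u u' : H) :
    φ ((2⁻¹ : ℝ) • u + (2⁻¹ : ℝ) • u') + r * ‖(2⁻¹ : ℝ) • u + (2⁻¹ : ℝ) • u'‖ ^ 2
        + r / 4 * ‖u - u'‖ ^ 2 ≤
      ((φ u + r * ‖u‖ ^ 2) + (φ u' + r * ‖u'‖ ^ 2)) / 2 := by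
  have hmid := hφ.2 (mem_univ u) (mem_univ u') (by norm_num : (0 : ℝ) ≤ 2⁻¹)
    (by norm_num : (0 : ℝ) ≤ 2⁻¹) (by norm_num)
  rw [sq_norm_midpoint]
  simp only [smul_eq_mul] at hmid
  linarith

lemma IsRegularizedMin.add_sq_norm_sub_le (hφ : ConvexOn ℝ univ φ) (hv : IsRegularizedMin φ r v)
    (u : H) : φ v + r * ‖v‖ ^ 2 + r / 2 * ‖u - v‖ ^ 2 ≤ φ u + r * ‖u‖ ^ 2 := by
  linarith [hv ((2⁻¹ : ℝ) • u + (2⁻¹ : ℝ) • v), hφ.add_mul_sq_norm_midpoint_le r u v]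

lemma IsRegularizedMin.sq_norm_sub_le_of_apply_le (hφ : ConvexOn ℝ univ φ) (hr : 0 < r)
    (hv : IsRegularizedMin φ r v) {y : H} (hy : φ y ≤ φ v) :
    ‖y - v‖ ^ 2 ≤ 2 * (‖y‖ ^ 2 - ‖v‖ ^ 2) := by
  have := hv.add_sq_norm_sub_le hφ y
  nlinarith

lemma IsRegularizedMin.norm_le_of_apply_le (hφ : ConvexOn ℝ univ φ) (hr : 0 < r)
    (hv : IsRegularizedMin φ r v) {y : H} (hy : φ y ≤ φ v) : ‖v‖ ≤ ‖y‖ := by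
  have := hv.sq_norm_sub_le_of_apply_le hφ hr hy
  exact pow_le_pow_iff_left₀ (norm_nonneg _) (norm_nonneg _) two_ne_zero |>.1
    (by nlinarith [sq_nonneg ‖y - v‖])

lemma IsRegularizedMin.add_mul_sq_norm_sub_le (hφ : ConvexOn ℝ univ φ)
    (hv : IsRegularizedMin φ r v) (hv' : IsRegularizedMin φ r' v') :
    (r + r') / 2 * ‖v - v'‖ ^ 2 ≤ (r' - r) * (‖v‖ ^ 2 - ‖v'‖ ^ 2) := by
  have h := hv.add_sq_norm_sub_le hφ v'
  rw [norm_sub_rev] at h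
  linarith [hv'.add_sq_norm_sub_le hφ v]

lemma IsRegularizedMin.norm_le_of_le (hφ : ConvexOn ℝ univ φ) (hr : 0 < r) (hrr' : r ≤ r')
    (hv : IsRegularizedMin φ r v) (hv' : IsRegularizedMin φ r' v') : ‖v'‖ ≤ ‖v‖ := by
  by_contra! hlt
  have key := hv.add_mul_sq_norm_sub_le hφ hv'
  have hsq : (‖v'‖ - ‖v‖) ^ 2 ≤ ‖v - v'‖ ^ 2 := by
    rw [norm_sub_rev, ← sq_abs]
    exact pow_le_pow_left₀ (abs_nonneg _) (abs_norm_sub_norm_le v' v) 2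
  have hrr : 0 < r + r' := by linarith
  nlinarith [mul_pos hrr (pow_pos (sub_pos.2 hlt) 2), mul_nonneg (sub_nonneg.2 hrr')
    (mul_nonneg (sub_pos.2 hlt).le (add_nonneg (norm_nonneg v) (norm_nonneg v')))]

lemma IsRegularizedMin.sq_norm_sub_le_of_le (hφ : ConvexOn ℝ univ φ) (hr : 0 < r) (hrr' : r ≤ r')
    (hv : IsRegularizedMin φ r v) (hv' : IsRegularizedMin φ r' v') :
    ‖v - v'‖ ^ 2 ≤ 2 * (‖v‖ ^ 2 - ‖v'‖ ^ 2) := by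
  have key := hv.add_mul_sq_norm_sub_le hφ hv'
  have hle := pow_le_pow_left₀ (norm_nonneg _) (hv.norm_le_of_le hφ hr hrr' hv') 2
  nlinarith [mul_nonneg (sub_nonneg.2 hrr') (sub_nonneg.2 hle)]

lemma IsRegularizedMin.mul_sq_norm_sub_le {ψ : H → ℝ} (hφ : ConvexOn ℝ univ φ)
    (hψ : ConvexOn ℝ univ ψ) {δ : ℝ} (hφψ : ∀ u, |φ u - ψ u| ≤ δ)
    (hv : IsRegularizedMin φ r v) (hv' : IsRegularizedMin ψ r v') :
    r * ‖v - v'‖ ^ 2 ≤ 2 * δ := by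
  have h := hv.add_sq_norm_sub_le hφ v'
  have h' := hv'.add_sq_norm_sub_le hψ v
  rw [norm_sub_rev] at h
  linarith [(abs_le.1 (hφψ v)).1, (abs_le.1 (hφψ v')).2]

lemma exists_isRegularizedMin [CompleteSpace H] (hφ : ConvexOn ℝ univ φ) (hφc : Continuous φ)
    (hbdd : BddBelow (range φ)) (hr : 0 < r) : ∃ v, IsRegularizedMin φ r v := by
  set F : H → ℝ := fun u => φ u + r * ‖u‖ ^ 2 with hF
  have hFbdd : BddBelow (range F) := by
    obtain ⟨b, hb⟩ := hbdd
    refine ⟨b, ?_⟩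
    rintro _ ⟨u, rfl⟩
    nlinarith [hb ⟨u, rfl⟩, sq_nonneg ‖u‖]
  set d := ⨅ u, F u
  have hdF : ∀ u, d ≤ F u := ciInf_le hFbdd
  have hseq : ∀ n : ℕ, ∃ u, F u < d + 1 / (n + 1) := fun n =>
    exists_lt_of_ciInf_lt (lt_add_of_pos_right d Nat.one_div_pos_of_nat)
  choose u hu using hseq
  have hFu : Tendsto (fun n => F (u n)) atTop (𝓝 d) :=
    tendsto_of_tendsto_of_tendsto_of_le_of_le tendsto_const_nhds
      (by simpa using tendsto_const_nhds.add (tendsto_one_div_add_atTop_nhds_zero_nat (𝕜 := ℝ)))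
      (fun n => hdF (u n)) (fun n => (hu n).le)
  -- A minimizing sequence is Cauchy: the midpoint of two near-minimizers cannot undercut `d`.
  have hcauchy : CauchySeq u := by
    refine Metric.cauchySeq_iff.2 fun ε hε => ?_
    obtain ⟨N, hN⟩ := eventually_atTop.1
      (hFu.eventually (gt_mem_nhds (lt_add_of_pos_right d (by positivity : 0 < r * ε ^ 2 / 4))))
    refine ⟨N, fun n hn k hk => ?_⟩
    have hmid := hφ.add_mul_sq_norm_midpoint_le r (u n) (u k)
    have := hdF ((2⁻¹ : ℝ) • u n + (2⁻¹ : ℝ) • u k)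
    have hsq : ‖u n - u k‖ ^ 2 < ε ^ 2 := by
      have := hN n hn; have := hN k hk
      simp only [hF] at *
      nlinarith
    rw [dist_eq_norm]
    exact lt_of_pow_lt_pow_left₀ 2 hε.le hsq
  obtain ⟨v, hv⟩ := cauchySeq_tendsto_of_complete hcauchy
  have hFc : Continuous F := hφc.add (continuous_const.mul (continuous_norm.pow 2))
  have hFv : F v = d := tendsto_nhds_unique ((hFc.tendsto v).comp hv) hFu
  exact ⟨v, fun y => hFv.le.trans (hdF y)⟩

lemma exists_isRegularizedMin_lt_norm [CompleteSpace H] (hφ : ConvexOn ℝ univ φ)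
    (hφc : Continuous φ) {x₀ : H} (hx₀ : ∀ y, φ x₀ ≤ φ y)
    (hx₀min : ∀ y, (∀ u, φ y ≤ φ u) → ‖x₀‖ ≤ ‖y‖) {b : ℝ} (hb : b < ‖x₀‖) :
    ∃ r > 0, ∀ v, IsRegularizedMin φ r v → b < ‖v‖ := by
  set r : ℕ → ℝ := fun n => 1 / (n + 1)
  have hr : ∀ n, 0 < r n := fun n => Nat.one_div_pos_of_nat
  have hr0 : Tendsto r atTop (𝓝 0) := tendsto_one_div_add_atTop_nhds_zero_nat
  have hbdd : BddBelow (range φ) := ⟨φ x₀, by rintro _ ⟨y, rfl⟩; exact hx₀ y⟩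
  choose v hv using fun n => exists_isRegularizedMin hφ hφc hbdd (hr n)
  have hmono : Monotone fun n => ‖v n‖ := fun n k hnk =>
    (hv k).norm_le_of_le hφ (hr k) (Nat.one_div_le_one_div hnk) (hv n)
  have hle : ∀ n, ‖v n‖ ≤ ‖x₀‖ := fun n => (hv n).norm_le_of_apply_le hφ (hr n) (hx₀ _)
  set L := ⨆ n, ‖v n‖
  have hL : Tendsto (fun n => ‖v n‖) atTop (𝓝 L) :=
    tendsto_atTop_ciSup hmono ⟨‖x₀‖, by rintro _ ⟨n, rfl⟩; exact hle n⟩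
  have hcauchy : CauchySeq v := by
    refine Metric.cauchySeq_iff'.2 fun ε hε => ?_
    have hL2 : Tendsto (fun n => 2 * (L ^ 2 - ‖v n‖ ^ 2)) atTop (𝓝 0) := by
      have := ((hL.pow 2).const_sub (L ^ 2)).const_mul 2
      rwa [sub_self, mul_zero] at this
    obtain ⟨N, hN⟩ := eventually_atTop.1 (hL2.eventually (gt_mem_nhds (pow_pos hε 2)))
    refine ⟨N, fun n hn => ?_⟩
    have h := (hv n).sq_norm_sub_le_of_le hφ (hr n) (Nat.one_div_le_one_div hn) (hv N)
    have hnL := pow_le_pow_left₀ (norm_nonneg _) (hmono.ge_of_tendsto hL n) 2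
    rw [dist_eq_norm]
    exact lt_of_pow_lt_pow_left₀ 2 hε.le (by linarith [hN N le_rfl])
  obtain ⟨vlim, hvlim⟩ := cauchySeq_tendsto_of_complete hcauchy
  -- `φ (v n) ≤ φ y + r n * ‖y‖ ^ 2`, so the limit `vlim` minimizes `φ`.
  have hvlimmin : ∀ y, φ vlim ≤ φ y := fun y =>
    le_of_tendsto_of_tendsto ((hφc.tendsto vlim).comp hvlim)
      (by simpa using tendsto_const_nhds.add (hr0.mul_const (‖y‖ ^ 2)))
      (Eventually.of_forall fun n => by
        dsimp only [Function.comp_apply]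
        nlinarith [hv n y, hr n, sq_nonneg ‖v n‖])
  have hLvlim : L = ‖vlim‖ := tendsto_nhds_unique hL ((continuous_norm.tendsto vlim).comp hvlim)
  have hbL : b < L := hb.trans_le (hLvlim ▸ hx₀min vlim hvlimmin)
  obtain ⟨N, hN⟩ := (hL.eventually (lt_mem_nhds hbL)).exists
  exact ⟨r N, hr N, fun v' hv' => hN.trans_le (hv'.norm_le_of_le hφ (hr N) le_rfl (hv N))⟩

variable {α : Type*} {l : Filter α} {ψ : α → H → ℝ}

lemma tendsto_isRegularizedMin_of_tendstoUniformly (hψ : ∀ a, ConvexOn ℝ univ (ψ a))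
    (hφ : ConvexOn ℝ univ φ) (hψφ : TendstoUniformly ψ φ l) (hr : 0 < r) {v : α → H}
    (hv : ∀ a, IsRegularizedMin (ψ a) r (v a)) (hv' : IsRegularizedMin φ r v') :
    Tendsto v l (𝓝 v') := by
  refine Metric.tendsto_nhds.2 fun ε hε => ?_
  filter_upwards [Metric.tendstoUniformly_iff.1 hψφ (r * ε ^ 2 / 4) (by positivity)] with a ha
  have h := (hv a).mul_sq_norm_sub_le (hψ a) hφ (δ := r * ε ^ 2 / 4)
    (fun u => by rw [abs_sub_comm]; exact (ha u).le) hv'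
  rw [dist_eq_norm]
  exact lt_of_pow_lt_pow_left₀ 2 hε.le (by nlinarith [mul_pos hr (pow_pos hε 2)])

variable [CompleteSpace H]

lemma eventually_lt_norm_of_isRegularizedMin (hψ : ∀ a, ConvexOn ℝ univ (ψ a))
    (hψc : ∀ a, Continuous (ψ a)) (hψb : ∀ a, BddBelow (range (ψ a)))
    (hφ : ConvexOn ℝ univ φ) (hφc : Continuous φ) (hψφ : TendstoUniformly ψ φ l)
    {x₀ : H} (hx₀ : ∀ y, φ x₀ ≤ φ y) (hx₀min : ∀ y, (∀ u, φ y ≤ φ u) → ‖x₀‖ ≤ ‖y‖)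
    {r : α → ℝ} (hr : Tendsto r l (𝓝[>] 0)) {z : α → H}
    (hz : ∀ᶠ a in l, IsRegularizedMin (ψ a) (r a) (z a)) {b : ℝ} (hb : b < ‖x₀‖) :
    ∀ᶠ a in l, b < ‖z a‖ := by
  obtain ⟨s, hs, hsb⟩ := exists_isRegularizedMin_lt_norm hφ hφc hx₀ hx₀min hb
  obtain ⟨v', hv'⟩ := exists_isRegularizedMin hφ hφc ⟨φ x₀, by rintro _ ⟨y, rfl⟩; exact hx₀ y⟩ hs
  choose v hv using fun a => exists_isRegularizedMin (hψ a) (hψc a) (hψb a) hs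
  -- `z a` carries the smaller parameter, hence is at least as long as `v a → v'`.
  have hvb : ∀ᶠ a in l, b < ‖v a‖ :=
    ((continuous_norm.tendsto v').comp
      (tendsto_isRegularizedMin_of_tendstoUniformly hψ hφ hψφ hs hv hv')).eventually
        (lt_mem_nhds (hsb v' hv'))
  filter_upwards [hvb, hz, (tendsto_nhdsWithin_iff.1 hr).2,
    (tendsto_nhdsWithin_iff.1 hr).1.eventually (ge_mem_nhds hs)] with a hva hza hra hrs
  exact hva.trans_le (hza.norm_le_of_le (hψ a) hra hrs (hv a))

theorem tendsto_isRegularizedMin_of_tendsto_zero (hψ : ∀ a, ConvexOn ℝ univ (ψ a))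
    (hψc : ∀ a, Continuous (ψ a)) (hφ : ConvexOn ℝ univ φ) (hφc : Continuous φ)
    (hψφ : TendstoUniformly ψ φ l) {x : α → H} (hx : ∀ a y, ψ a (x a) ≤ ψ a y) {x₀ : H}
    (hxx₀ : Tendsto x l (𝓝 x₀)) (hx₀ : ∀ y, φ x₀ ≤ φ y)
    (hx₀min : ∀ y, (∀ u, φ y ≤ φ u) → ‖x₀‖ ≤ ‖y‖) {r : α → ℝ} (hr : Tendsto r l (𝓝[>] 0))
    {z : α → H} (hz : ∀ᶠ a in l, IsRegularizedMin (ψ a) (r a) (z a)) :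
    Tendsto z l (𝓝 x₀) := by
  have hz' : ∀ᶠ a in l, 0 < r a ∧ IsRegularizedMin (ψ a) (r a) (z a) :=
    (tendsto_nhdsWithin_iff.1 hr).2.and hz
  have hnx : Tendsto (fun a => ‖x a‖) l (𝓝 ‖x₀‖) := (continuous_norm.tendsto x₀).comp hxx₀
  have hnz : Tendsto (fun a => ‖z a‖) l (𝓝 ‖x₀‖) := by
    refine tendsto_order.2 ⟨fun b hb => eventually_lt_norm_of_isRegularizedMin hψ hψc
      (fun a => ⟨ψ a (x a), by rintro _ ⟨y, rfl⟩; exact hx a y⟩) hφ hφc hψφ hx₀ hx₀min hr hz hb,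
      fun b hb => ?_⟩
    filter_upwards [hnx.eventually (gt_mem_nhds hb), hz'] with a hxa ⟨hra, hza⟩
    exact (hza.norm_le_of_apply_le (hψ a) hra (hx a (z a))).trans_lt hxa
  have hxz : Tendsto (fun a => ‖x a - z a‖ ^ 2) l (𝓝 0) := by
    have hbound : Tendsto (fun a => 2 * (‖x a‖ ^ 2 - ‖z a‖ ^ 2)) l (𝓝 0) := by
      have := ((hnx.pow 2).sub (hnz.pow 2)).const_mul 2
      rwa [sub_self, mul_zero] at this
    refine tendsto_of_tendsto_of_tendsto_of_le_of_le' tendsto_const_nhds hbound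
      (Eventually.of_forall fun a => sq_nonneg _) ?_
    filter_upwards [hz'] with a ⟨hra, hza⟩
    exact hza.sq_norm_sub_le_of_apply_le (hψ a) hra (hx a (z a))
  have hxz' : Tendsto (fun a => x a - z a) l (𝓝 0) := by
    rw [tendsto_zero_iff_norm_tendsto_zero]
    simpa [Real.sqrt_sq (norm_nonneg _)] using hxz.sqrt
  simpa using hxx₀.sub hxz'

end Regularization

section FiniteSup

variable {ι : Type*}

lemma convexOn_ciSup [Finite ι] [Nonempty ι] {E : Type*} [AddCommGroup E] [Module ℝ E]
    {s : Set E} {g : ι → E → ℝ} (hg : ∀ i, ConvexOn ℝ s (g i)) :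
    ConvexOn ℝ s fun x => ⨆ i, g i x := by
  refine ⟨(hg (Classical.arbitrary ι)).1, fun x hx y hy a b ha hb hab => ciSup_le fun i => ?_⟩
  have hgx := le_ciSup (Finite.bddAbove_range fun j => g j x) i
  have hgy := le_ciSup (Finite.bddAbove_range fun j => g j y) i
  have hgi := (hg i).2 hx hy ha hb hab
  simp only [smul_eq_mul] at hgi ⊢
  linarith [mul_le_mul_of_nonneg_left hgx ha, mul_le_mul_of_nonneg_left hgy hb]

lemma continuous_ciSup [Fintype ι] [Nonempty ι] {E : Type*} [TopologicalSpace E]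
    {g : ι → E → ℝ} (hg : ∀ i, Continuous (g i)) : Continuous fun x => ⨆ i, g i x := by
  simpa only [Finset.sup'_univ_eq_ciSup] using
    Continuous.finset_sup'_apply Finset.univ_nonempty fun i _ => hg i

lemma ciSup_sub_le_ciSup_sub_add_norm [Fintype ι] [Nonempty ι] (a c c' : ι → ℝ) :
    ⨆ i, (a i - c i) ≤ (⨆ i, (a i - c' i)) + ‖c - c'‖ := by
  refine ciSup_le fun i => ?_
  have h := le_ciSup (Finite.bddAbove_range fun j => a j - c' j) i
  have hc := norm_le_pi_norm (c - c') i
  rw [Pi.sub_apply, Real.norm_eq_abs] at hc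
  linarith [neg_abs_le (c i - c' i)]

lemma abs_ciSup_sub_sub_ciSup_sub_le [Fintype ι] [Nonempty ι] (a c c' : ι → ℝ) :
    |(⨆ i, (a i - c i)) - ⨆ i, (a i - c' i)| ≤ ‖c - c'‖ := by
  rw [abs_sub_le_iff]
  constructor
  · linarith [ciSup_sub_le_ciSup_sub_add_norm a c c']
  · linarith [ciSup_sub_le_ciSup_sub_add_norm a c' c, norm_sub_rev c c']

end FiniteSup

theorem stmt_5_general
    {H : Type*} [NormedAddCommGroup H] [InnerProductSpace ℝ H] [CompleteSpace H]
    {m : ℕ} (hm : 0 < m) (f : Fin m → H → ℝ)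
    (hconv : ∀ i, ConvexOn ℝ Set.univ (f i))
    (hdiff : ∀ i, Differentiable ℝ (f i))
    (t₀ β p : ℝ) (hβ : 0 < β) (hp : 0 < p)
    (S : (Fin m → ℝ) → Set H)
    (hSdef : ∀ c : Fin m → ℝ,
      S c = {z : H | ∀ y : H, (⨆ i, (f i z - c i)) ≤ ⨆ i, (f i y - c i)})
    (z₀ : (Fin m → ℝ) → H) (hz₀cont : Continuous z₀)
    (hz₀mem : ∀ c, z₀ c ∈ S c) (hz₀min : ∀ c, ∀ y ∈ S c, ‖z₀ c‖ ≤ ‖y‖)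
    (w : ℝ → Fin m → ℝ)
    (cstar : Fin m → ℝ) (hw : Tendsto w atTop (𝓝 cstar))
    (z : ℝ → H)
    (hz : ∀ t, t₀ ≤ t → ∀ u : H,
      (⨆ i, (f i (z t) - w t i)) + β / (2 * t ^ p) * ‖z t‖ ^ 2 ≤
        (⨆ i, (f i u - w t i)) + β / (2 * t ^ p) * ‖u‖ ^ 2) :
    Tendsto (fun t => ‖z t - z₀ cstar‖) atTop (𝓝 0) := by
  have : Nonempty (Fin m) := ⟨⟨0, hm⟩⟩
  set Φ : (Fin m → ℝ) → H → ℝ := fun c u => ⨆ i, (f i u - c i)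
  have hΦconv : ∀ c, ConvexOn ℝ univ (Φ c) := fun c =>
    convexOn_ciSup fun i => (hconv i).sub (concaveOn_const (c i) convex_univ)
  have hΦcont : ∀ c, Continuous (Φ c) := fun c =>
    continuous_ciSup fun i => (hdiff i).continuous.sub continuous_const
  have hS : ∀ c y, y ∈ S c ↔ ∀ u, Φ c y ≤ Φ c u := fun c y => by rw [hSdef c]; rfl
  have hΦw : TendstoUniformly (fun t => Φ (w t)) (Φ cstar) atTop := by
    refine Metric.tendstoUniformly_iff.2 fun ε hε => ?_
    filter_upwards [Metric.tendsto_nhds.1 hw ε hε] with t ht u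
    rw [Real.dist_eq, dist_comm, dist_eq_norm] at *
    exact (abs_ciSup_sub_sub_ciSup_sub_le _ _ _).trans_lt ht
  have hr : Tendsto (fun t => β / (2 * t ^ p)) atTop (𝓝[>] 0) :=
    tendsto_nhdsWithin_iff.2 ⟨tendsto_const_nhds.div_atTop
      ((tendsto_rpow_atTop hp).const_mul_atTop two_pos),
      (eventually_gt_atTop 0).mono fun t ht =>
        div_pos hβ (mul_pos two_pos (Real.rpow_pos_of_pos ht p))⟩
  refine tendsto_iff_norm_sub_tendsto_zero.1 <|
    tendsto_isRegularizedMin_of_tendsto_zero (fun t => hΦconv (w t)) (fun t => hΦcont (w t))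
      (hΦconv cstar) (hΦcont cstar) hΦw (x := fun t => z₀ (w t))
      (fun t => (hS _ _).1 (hz₀mem (w t))) ((hz₀cont.tendsto cstar).comp hw)
      ((hS _ _).1 (hz₀mem cstar)) (fun y hy => hz₀min cstar y ((hS _ _).2 hy)) hr ?_
  filter_upwards [eventually_ge_atTop t₀] with t ht using hz t ht

/-- If `S(c) ≠ ∅` for all `c`, `z₀ : ℝ^m → H` is a continuous selection of
minimum-norm elements of `S(c)`, `w(t) → c*` is continuous on `[t₀,∞)`, and for every `t ≥ t₀`,
`z(t)` minimizes `u ↦ max_i (f_i(u) − w_i(t)) + (β/(2t^p))‖u‖²`, then `z(t) → z₀(c*)` strongly. -/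
theorem stmt_5
    {H : Type*} [NormedAddCommGroup H] [InnerProductSpace ℝ H] [CompleteSpace H]
    {m : ℕ} (hm : 0 < m) (f : Fin m → H → ℝ)
    (hconv : ∀ i, ConvexOn ℝ Set.univ (f i))
    (hdiff : ∀ i, Differentiable ℝ (f i))
    (hlip : ∀ i, ∃ L : ℝ≥0, LipschitzWith L (gradient (f i)))
    (t₀ β p : ℝ) (ht₀ : 0 < t₀) (hβ : 0 < β) (hp : 0 < p)
    (S : (Fin m → ℝ) → Set H)
    (hSdef : ∀ c : Fin m → ℝ,
      S c = {z : H | ∀ y : H, (⨆ i, (f i z - c i)) ≤ ⨆ i, (f i y - c i)})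
    (hS : ∀ c : Fin m → ℝ, (S c).Nonempty)
    (z₀ : (Fin m → ℝ) → H) (hz₀cont : Continuous z₀)
    (hz₀mem : ∀ c, z₀ c ∈ S c) (hz₀min : ∀ c, ∀ y ∈ S c, ‖z₀ c‖ ≤ ‖y‖)
    (w : ℝ → Fin m → ℝ) (hwcont : ContinuousOn w (Set.Ici t₀))
    (cstar : Fin m → ℝ) (hw : Tendsto w atTop (𝓝 cstar))
    (z : ℝ → H)
    (hz : ∀ t, t₀ ≤ t → ∀ u : H,
      (⨆ i, (f i (z t) - w t i)) + β / (2 * t ^ p) * ‖z t‖ ^ 2 ≤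
        (⨆ i, (f i u - w t i)) + β / (2 * t ^ p) * ‖u‖ ^ 2) :
    Tendsto (fun t => ‖z t - z₀ cstar‖) atTop (𝓝 0) :=
  stmt_5_general hm f hconv hdiff t₀ β p hβ hp S hSdef z₀ hz₀cont hz₀mem hz₀min w cstar hw z hz
end

section
/- Let t₀ > 0, β > 0, p > 0 and a ∈ ℝ^m with a_i ≥ 0 for all i. Let x : [t₀,∞) → H satisfy x(t) ∈ L(F, F(x(t₀)) + a) for all t ≥ t₀, and assume S(F(x(t))) ≠ ∅ for every t ≥ t₀. Assume there exists R ≥ 0 such that for every y ∈ LP_w(F, F(x(t₀)) + a) and every ε > 0 there is z' ∈ H with F(z') = F(y) and ‖z'‖ ≤ R + ε. Let z : [t₀,∞) → H be such that for every t ≥ t₀, z(t) minimizes u ↦ max_{i=1,…,m}(f_i(u) − f_i(x(t))) + (β/(2t^p))‖u‖² over H. Then ‖z(t)‖ ≤ R for all t ≥ t₀. -/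
open scoped NNReal

/-!
A minimizer `u` of the max-scalarization `y ↦ maxᵢ (fᵢ y − fᵢ(x t))` is weakly Pareto optimal
and lies below `F(x t)`, hence in the level set, so `R + ε` bounds the norm of some `w` with
`F w = F u`. Since `w` is then also a minimizer of the scalarization, comparing the regularized
objective at `z t` and at `w` leaves only the penalty terms: `‖z t‖ ≤ ‖w‖ ≤ R + ε`.
-/

section Scalarization

variable {ι X : Type*} [Finite ι] {f : ι → X → ℝ} {c : ι → ℝ} {u : X}

theorem ciSup_lt_ciSup_of_forall_lt [Nonempty ι] {g h : ι → ℝ} (hgh : ∀ i, g i < h i) :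
    ⨆ i, g i < ⨆ i, h i := by
  obtain ⟨j, hj⟩ := exists_eq_ciSup_of_finite (f := g)
  calc ⨆ i, g i = g j := hj.symm
    _ < h j := hgh j
    _ ≤ ⨆ i, h i := le_ciSup (Set.finite_range h).bddAbove j

theorem not_exists_forall_lt_of_forall_iSup_sub_le [Nonempty ι]
    (hu : ∀ y, ⨆ i, (f i u - c i) ≤ ⨆ i, (f i y - c i)) :
    ¬ ∃ v, ∀ i, f i v < f i u := by
  rintro ⟨v, hv⟩
  exact (hu v).not_gt (ciSup_lt_ciSup_of_forall_lt fun i => sub_lt_sub_right (hv i) (c i))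

theorem apply_le_of_forall_iSup_sub_le {x : X}
    (hu : ∀ y, ⨆ i, (f i u - f i x) ≤ ⨆ i, (f i y - f i x)) (i : ι) :
    f i u ≤ f i x :=
  sub_nonpos.mp <|
    calc f i u - f i x ≤ ⨆ j, (f j u - f j x) :=
          le_ciSup (f := fun j => f j u - f j x) (Set.finite_range _).bddAbove i
      _ ≤ ⨆ j, (f j x - f j x) := hu x
      _ = 0 := by simp only [sub_self, Real.iSup_const_zero]

end Scalarization

theorem norm_le_norm_of_add_mul_sq_le {E : Type*} [SeminormedAddCommGroup E] {φ : E → ℝ}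
    {c : ℝ} (hc : 0 < c) {z w : E} (hzw : φ z + c * ‖z‖ ^ 2 ≤ φ w + c * ‖w‖ ^ 2)
    (hφ : φ w ≤ φ z) : ‖z‖ ≤ ‖w‖ := by
  have hsq : ‖z‖ ^ 2 ≤ ‖w‖ ^ 2 := le_of_mul_le_mul_left (by linarith) hc
  exact (pow_le_pow_iff_left₀ (norm_nonneg z) (norm_nonneg w) two_ne_zero).mp hsq

theorem stmt_6_general
    {H : Type*} [NormedAddCommGroup H]
    {m : ℕ} (hm : 0 < m) (f : Fin m → H → ℝ)
    (t₀ β p : ℝ) (ht₀ : 0 < t₀) (hβ : 0 < β)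
    (a : Fin m → ℝ)
    (x : ℝ → H)
    (hxlevel : ∀ t, t₀ ≤ t → ∀ i, f i (x t) ≤ f i (x t₀) + a i)
    (hS : ∀ t, t₀ ≤ t →
      ∃ u : H, ∀ y : H, (⨆ i, (f i u - f i (x t))) ≤ ⨆ i, (f i y - f i (x t)))
    (R : ℝ)
    (hRbound : ∀ y : H,
      ((∀ i, f i y ≤ f i (x t₀) + a i) ∧ ¬ ∃ u : H, ∀ i, f i u < f i y) →
      ∀ ε : ℝ, 0 < ε → ∃ z' : H, (∀ i, f i z' = f i y) ∧ ‖z'‖ ≤ R + ε)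
    (z : ℝ → H)
    (hz : ∀ t, t₀ ≤ t → ∀ u : H,
      (⨆ i, (f i (z t) - f i (x t))) + β / (2 * t ^ p) * ‖z t‖ ^ 2 ≤
        (⨆ i, (f i u - f i (x t))) + β / (2 * t ^ p) * ‖u‖ ^ 2) :
    ∀ t, t₀ ≤ t → ‖z t‖ ≤ R := by
  have : Nonempty (Fin m) := ⟨⟨0, hm⟩⟩
  intro t ht
  obtain ⟨u, hu⟩ := hS t ht
  have hu_pareto := not_exists_forall_lt_of_forall_iSup_sub_le hu
  have hu_level i : f i u ≤ f i (x t₀) + a i :=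
    (apply_le_of_forall_iSup_sub_le hu i).trans (hxlevel t ht i)
  have hpenalty : 0 < β / (2 * t ^ p) :=
    div_pos hβ (mul_pos two_pos (Real.rpow_pos_of_pos (ht₀.trans_le ht) p))
  refine le_of_forall_pos_le_add fun ε hε => ?_
  obtain ⟨w, hFw, hw⟩ := hRbound u ⟨hu_level, hu_pareto⟩ ε hε
  have hw_min : ⨆ i, (f i w - f i (x t)) ≤ ⨆ i, (f i (z t) - f i (x t)) := by
    simpa only [hFw] using hu (z t)
  exact (norm_le_norm_of_add_mul_sq_le (φ := fun y => ⨆ i, (f i y - f i (x t))) hpenalty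
    (hz t ht w) hw_min).trans hw

/-- If `x(t) ∈ L(F, F(x(t₀)) + a)` for all `t ≥ t₀` (`a ≥ 0`),
`S(F(x(t))) ≠ ∅` for all `t ≥ t₀`, and `R` bounds the infimal norms over the fibers of `F`
over `LP_w(F, F(x(t₀)) + a)`, then the generalized regularization path
`z(t) = argmin_u max_i (f_i(u) − f_i(x(t))) + (β/(2t^p))‖u‖²` satisfies `‖z(t)‖ ≤ R`. -/
theorem stmt_6
    {H : Type*} [NormedAddCommGroup H] [InnerProductSpace ℝ H] [CompleteSpace H]
    {m : ℕ} (hm : 0 < m) (f : Fin m → H → ℝ)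
    (hconv : ∀ i, ConvexOn ℝ Set.univ (f i))
    (hdiff : ∀ i, Differentiable ℝ (f i))
    (hlip : ∀ i, ∃ L : ℝ≥0, LipschitzWith L (gradient (f i)))
    (t₀ β p : ℝ) (ht₀ : 0 < t₀) (hβ : 0 < β) (hp : 0 < p)
    (a : Fin m → ℝ) (ha : ∀ i, 0 ≤ a i)
    (x : ℝ → H)
    (hxlevel : ∀ t, t₀ ≤ t → ∀ i, f i (x t) ≤ f i (x t₀) + a i)
    (hS : ∀ t, t₀ ≤ t →
      ∃ u : H, ∀ y : H, (⨆ i, (f i u - f i (x t))) ≤ ⨆ i, (f i y - f i (x t)))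
    (R : ℝ) (hR : 0 ≤ R)
    (hRbound : ∀ y : H,
      ((∀ i, f i y ≤ f i (x t₀) + a i) ∧ ¬ ∃ u : H, ∀ i, f i u < f i y) →
      ∀ ε : ℝ, 0 < ε → ∃ z' : H, (∀ i, f i z' = f i y) ∧ ‖z'‖ ≤ R + ε)
    (z : ℝ → H)
    (hz : ∀ t, t₀ ≤ t → ∀ u : H,
      (⨆ i, (f i (z t) - f i (x t))) + β / (2 * t ^ p) * ‖z t‖ ^ 2 ≤
        (⨆ i, (f i u - f i (x t))) + β / (2 * t ^ p) * ‖u‖ ^ 2) :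
    ∀ t, t₀ ≤ t → ‖z t‖ ≤ R :=
  stmt_6_general hm f t₀ β p ht₀ hβ a x hxlevel hS R hRbound z hz
end

section
/- Let t₀ > 0, β > 0, p > 0 and let w : [t₀,∞) → ℝ^m be continuous. Let z : [t₀,∞) → H be such that for every t ≥ t₀, z(t) is the unique minimizer over H of u ↦ max_{i=1,…,m}(f_i(u) − w_i(t)) + (β/(2t^p))‖u‖². If z is bounded on [t₀,∞), then z is continuous on [t₀,∞). -/
/-!
For convex `g` the regularized objective `φ = g + c‖·‖²` is strongly convex, so its minimizer `z`
has quadratic growth: `c/2 ‖u - z‖² ≤ φ u - φ z` (midpoint convexity plus the parallelogram law).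
Adding this growth for the parameters `t` and `s`, each evaluated at the other's minimizer, bounds
`(c t + c s)/2 ‖z s - z t‖²` by `2‖w s - w t‖ + |c t - c s| M²`, where `‖w s - w t‖` controls the
max-terms uniformly and `M` bounds `‖z‖`; this vanishes as `s → t`.
-/

open Filter Topology Set
open scoped NNReal

section FiniteSupremum

variable {ι : Type*} [Finite ι]

theorem ConvexOn.iSup_of_finite {E : Type*} [AddCommGroup E] [Module ℝ E] {s : Set E}
    {f : ι → E → ℝ} (hs : Convex ℝ s) (hf : ∀ i, ConvexOn ℝ s (f i)) :
    ConvexOn ℝ s (fun x => ⨆ i, f i x) := by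
  refine ⟨hs, fun x hx y hy a b ha hb hab => ?_⟩
  rcases isEmpty_or_nonempty ι with hι | hι
  · simp [Real.iSup_of_isEmpty]
  have hle (u : E) (i : ι) : f i u ≤ ⨆ j, f j u :=
    le_ciSup (f := (f · u)) (Finite.bddAbove_range _) i
  exact ciSup_le fun i => ((hf i).2 hx hy ha hb hab).trans (by gcongr <;> apply hle)

theorem abs_iSup_sub_iSup_le_norm_sub [Fintype ι] (x y : ι → ℝ) :
    |(⨆ i, x i) - ⨆ i, y i| ≤ ‖x - y‖ := by
  rcases isEmpty_or_nonempty ι with hι | hι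
  · simp [Real.iSup_of_isEmpty]
  have iSup_le_iSup_add (x y : ι → ℝ) : ⨆ i, x i ≤ (⨆ i, y i) + ‖x - y‖ := by
    refine ciSup_le fun i => ?_
    have hxy : x i - y i ≤ ‖x - y‖ := (le_abs_self _).trans (norm_le_pi_norm (x - y) i)
    linarith [le_ciSup (Finite.bddAbove_range y) i]
  rw [abs_sub_le_iff]
  constructor <;> linarith [iSup_le_iSup_add x y, iSup_le_iSup_add y x, norm_sub_rev x y]

end FiniteSupremum

section QuadraticRegularization

variable {E : Type*} [NormedAddCommGroup E] [InnerProductSpace ℝ E]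

theorem ConvexOn.half_mul_sq_norm_sub_le_of_isMinOn {g : E → ℝ} {c : ℝ} {z : E}
    (hg : ConvexOn ℝ univ g) (hz : IsMinOn (fun u => g u + c * ‖u‖ ^ 2) univ z) (u : E) :
    c / 2 * ‖u - z‖ ^ 2 ≤ (g u + c * ‖u‖ ^ 2) - (g z + c * ‖z‖ ^ 2) := by
  set v : E := (1 / 2 : ℝ) • u + (1 / 2 : ℝ) • z
  have hgv : g v ≤ (g u + g z) / 2 := by
    have := hg.2 (mem_univ u) (mem_univ z) (by norm_num : (0 : ℝ) ≤ 1 / 2)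
      (by norm_num : (0 : ℝ) ≤ 1 / 2) (by norm_num)
    simp only [smul_eq_mul] at this
    linarith
  have hv : ‖v‖ ^ 2 = (2 * ‖u‖ ^ 2 + 2 * ‖z‖ ^ 2 - ‖u - z‖ ^ 2) / 4 := by
    have hpar := parallelogram_law_with_norm ℝ u z
    rw [show v = (1 / 2 : ℝ) • (u + z) by rw [smul_add], norm_smul,
      Real.norm_of_nonneg (by norm_num)]
    linear_combination (1 / 4 : ℝ) * hpar
  have hzv := isMinOn_univ_iff.1 hz v
  simp only [hv] at hzv
  linarith

theorem add_half_mul_sq_norm_sub_le_of_isMinOn {g₁ g₂ : E → ℝ} {c₁ c₂ δ M : ℝ} {z₁ z₂ : E}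
    (hg₁ : ConvexOn ℝ univ g₁) (hg₂ : ConvexOn ℝ univ g₂)
    (hz₁ : IsMinOn (fun u => g₁ u + c₁ * ‖u‖ ^ 2) univ z₁)
    (hz₂ : IsMinOn (fun u => g₂ u + c₂ * ‖u‖ ^ 2) univ z₂)
    (hδ : ∀ u, |g₁ u - g₂ u| ≤ δ) (hM₁ : ‖z₁‖ ≤ M) (hM₂ : ‖z₂‖ ≤ M) :
    (c₁ + c₂) / 2 * ‖z₁ - z₂‖ ^ 2 ≤ 2 * δ + |c₁ - c₂| * M ^ 2 := by
  have h₁ := hg₁.half_mul_sq_norm_sub_le_of_isMinOn hz₁ z₂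
  have h₂ := hg₂.half_mul_sq_norm_sub_le_of_isMinOn hz₂ z₁
  have hsq : |‖z₂‖ ^ 2 - ‖z₁‖ ^ 2| ≤ M ^ 2 :=
    abs_sub_le_of_nonneg_of_le (sq_nonneg _) (pow_le_pow_left₀ (norm_nonneg _) hM₂ 2)
      (sq_nonneg _) (pow_le_pow_left₀ (norm_nonneg _) hM₁ 2)
  have hc : (c₁ - c₂) * (‖z₂‖ ^ 2 - ‖z₁‖ ^ 2) ≤ |c₁ - c₂| * M ^ 2 :=
    calc (c₁ - c₂) * (‖z₂‖ ^ 2 - ‖z₁‖ ^ 2) ≤ |c₁ - c₂| * |‖z₂‖ ^ 2 - ‖z₁‖ ^ 2| :=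
          (le_abs_self _).trans (abs_mul _ _).le
      _ ≤ |c₁ - c₂| * M ^ 2 := by gcongr
  rw [norm_sub_rev] at h₁
  linarith [(abs_le.1 (hδ z₁)).1, (abs_le.1 (hδ z₂)).2]

theorem continuousWithinAt_of_isMinOn_add_mul_sq_norm {α : Type*} [TopologicalSpace α]
    {s : Set α} {t : α} {g : α → E → ℝ} {c δ : α → ℝ} {z : α → E} {M : ℝ} (ht : t ∈ s)
    (hg : ∀ a ∈ s, ConvexOn ℝ univ (g a)) (hct : 0 < c t) (hc : ContinuousWithinAt c s t)
    (hz : ∀ a ∈ s, IsMinOn (fun u => g a u + c a * ‖u‖ ^ 2) univ (z a))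
    (hδ : ∀ a ∈ s, ∀ u, |g t u - g a u| ≤ δ a) (hδt : Tendsto δ (𝓝[s] t) (𝓝 0))
    (hM : ∀ a ∈ s, ‖z a‖ ≤ M) :
    ContinuousWithinAt z s t := by
  have hbound :
      Tendsto (fun a => 2 / c t * (2 * δ a + |c t - c a| * M ^ 2)) (𝓝[s] t) (𝓝 0) := by
    have hca : Tendsto (fun a => |c t - c a|) (𝓝[s] t) (𝓝 0) := by
      simpa using ((tendsto_const_nhds (x := c t)).sub hc).abs
    simpa using ((hδt.const_mul 2).add (hca.mul_const (M ^ 2))).const_mul (2 / c t)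
  have hle : ∀ᶠ a in 𝓝[s] t, ‖z a - z t‖ ≤ √(2 / c t * (2 * δ a + |c t - c a| * M ^ 2)) := by
    filter_upwards [self_mem_nhdsWithin, hc.eventually_const_lt hct] with a ha hca
    refine Real.le_sqrt_of_sq_le ?_
    have hstab := add_half_mul_sq_norm_sub_le_of_isMinOn (hg t ht) (hg a ha) (hz t ht) (hz a ha)
      (hδ a ha) (hM t ht) (hM a ha)
    have hstab' : c t / 2 * ‖z t - z a‖ ^ 2 ≤ 2 * δ a + |c t - c a| * M ^ 2 :=
      le_trans (by gcongr; linarith) hstab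
    rw [norm_sub_rev, div_mul_eq_mul_div, le_div_iff₀ hct]
    linarith
  rw [ContinuousWithinAt, tendsto_iff_norm_sub_tendsto_zero]
  exact squeeze_zero' (.of_forall fun _ => norm_nonneg _) hle (by simpa using hbound.sqrt)

end QuadraticRegularization

theorem stmt_7_general
    {H : Type*} [NormedAddCommGroup H] [InnerProductSpace ℝ H]
    {m : ℕ} (f : Fin m → H → ℝ)
    (hconv : ∀ i, ConvexOn ℝ Set.univ (f i))
    (t₀ β p : ℝ) (ht₀ : 0 < t₀) (hβ : 0 < β)
    (w : ℝ → Fin m → ℝ) (hwcont : ContinuousOn w (Set.Ici t₀))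
    (z : ℝ → H)
    (hzmin : ∀ t, t₀ ≤ t → ∀ u : H,
      (⨆ i, (f i (z t) - w t i)) + β / (2 * t ^ p) * ‖z t‖ ^ 2 ≤
        (⨆ i, (f i u - w t i)) + β / (2 * t ^ p) * ‖u‖ ^ 2)
    (hbdd : ∃ M : ℝ, ∀ t, t₀ ≤ t → ‖z t‖ ≤ M) :
    ContinuousOn z (Set.Ici t₀) := by
  obtain ⟨M, hM⟩ := hbdd
  intro t (ht : t₀ ≤ t)
  have htpos : 0 < t := ht₀.trans_le ht
  have hc : ContinuousWithinAt (fun s => β / (2 * s ^ p)) (Ici t₀) t :=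
    (continuousAt_const.div (continuousAt_const.mul
      (Real.continuousAt_rpow_const _ _ (.inl htpos.ne')))
      (by positivity : (2 : ℝ) * t ^ p ≠ 0)).continuousWithinAt
  have hδ (s : ℝ) (u : H) :
      |(⨆ i, (f i u - w t i)) - ⨆ i, (f i u - w s i)| ≤ ‖w s - w t‖ := by
    have hdiff : (fun i => f i u - w t i) - (fun i => f i u - w s i) = w s - w t := by
      ext i
      simp only [Pi.sub_apply]
      ring
    simpa only [hdiff] using
      abs_iSup_sub_iSup_le_norm_sub (fun i => f i u - w t i) (fun i => f i u - w s i)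
  exact continuousWithinAt_of_isMinOn_add_mul_sq_norm (g := fun s u => ⨆ i, (f i u - w s i))
    (c := fun s => β / (2 * s ^ p)) ht
    (fun s _ => .iSup_of_finite convex_univ fun i => (hconv i).sub (concaveOn_const _ convex_univ))
    (by positivity) hc (fun s hs => isMinOn_univ_iff.2 (hzmin s hs)) (fun s _ => hδ s)
    (tendsto_iff_norm_sub_tendsto_zero.1 (hwcont t ht)) hM

/-- If for every `t ≥ t₀`, `z(t)` is the unique minimizer over `H` of
`u ↦ max_i (f_i(u) − w_i(t)) + (β/(2t^p))‖u‖²`, with `w` continuous on `[t₀,∞)` and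
`z` bounded there, then `z` is continuous on `[t₀,∞)`. -/
theorem stmt_7
    {H : Type*} [NormedAddCommGroup H] [InnerProductSpace ℝ H] [CompleteSpace H]
    {m : ℕ} (hm : 0 < m) (f : Fin m → H → ℝ)
    (hconv : ∀ i, ConvexOn ℝ Set.univ (f i))
    (hdiff : ∀ i, Differentiable ℝ (f i))
    (hlip : ∀ i, ∃ L : ℝ≥0, LipschitzWith L (gradient (f i)))
    (t₀ β p : ℝ) (ht₀ : 0 < t₀) (hβ : 0 < β) (hp : 0 < p)
    (w : ℝ → Fin m → ℝ) (hwcont : ContinuousOn w (Set.Ici t₀))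
    (z : ℝ → H)
    (hzmin : ∀ t, t₀ ≤ t → ∀ u : H,
      (⨆ i, (f i (z t) - w t i)) + β / (2 * t ^ p) * ‖z t‖ ^ 2 ≤
        (⨆ i, (f i u - w t i)) + β / (2 * t ^ p) * ‖u‖ ^ 2)
    (hzuniq : ∀ t, t₀ ≤ t → ∀ u : H,
      (∀ v : H, (⨆ i, (f i u - w t i)) + β / (2 * t ^ p) * ‖u‖ ^ 2 ≤
        (⨆ i, (f i v - w t i)) + β / (2 * t ^ p) * ‖v‖ ^ 2) → u = z t)
    (hbdd : ∃ M : ℝ, ∀ t, t₀ ≤ t → ‖z t‖ ≤ M) :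
    ContinuousOn z (Set.Ici t₀) :=
  stmt_7_general f hconv t₀ β p ht₀ hβ w hwcont z hzmin hbdd
end

section
/- Let β > 0, p > 0, t > 0 and x ∈ H. Set f_{t,i}(u) := f_i(u) + (β/(2t^p))‖u‖² for u ∈ H and i = 1,…,m, and let z* ∈ H be a minimizer over H of u ↦ max_{i=1,…,m}(f_{t,i}(u) − f_{t,i}(x)). Then for every y ∈ H: min_{i=1,…,m}(f_i(x) − f_i(y)) ≤ min_{i=1,…,m}(f_{t,i}(x) − f_{t,i}(z*)) + (β/(2t^p))‖y‖². -/
open Filter Topology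
open scoped NNReal

/-- With `f_{t,i}(u) = f_i(u) + (β/(2t^p))‖u‖²` and `z*` a minimizer of
`u ↦ max_i (f_{t,i}(u) − f_{t,i}(x))`, for every `y ∈ H`:
`min_i (f_i(x) − f_i(y)) ≤ min_i (f_{t,i}(x) − f_{t,i}(z*)) + (β/(2t^p))‖y‖²`. -/
theorem stmt_8
    {H : Type*} [NormedAddCommGroup H] [InnerProductSpace ℝ H] [CompleteSpace H]
    {m : ℕ} (hm : 0 < m) (f : Fin m → H → ℝ)
    (hconv : ∀ i, ConvexOn ℝ Set.univ (f i))
    (hdiff : ∀ i, Differentiable ℝ (f i))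
    (hlip : ∀ i, ∃ L : ℝ≥0, LipschitzWith L (gradient (f i)))
    (β p t : ℝ) (hβ : 0 < β) (hp : 0 < p) (ht : 0 < t)
    (x : H)
    (ft : Fin m → H → ℝ)
    (hft : ∀ i u, ft i u = f i u + β / (2 * t ^ p) * ‖u‖ ^ 2)
    (zstar : H)
    (hzstar : ∀ u : H, (⨆ i, (ft i zstar - ft i x)) ≤ ⨆ i, (ft i u - ft i x)) :
    ∀ y : H, (⨅ i, (f i x - f i y)) ≤
      (⨅ i, (ft i x - ft i zstar)) + β / (2 * t ^ p) * ‖y‖ ^ 2 := by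
  intro y
  haveI : Nonempty (Fin m) := ⟨⟨0, hm⟩⟩
  set c : ℝ := β / (2 * t ^ p) with hc
  have hc0 : 0 ≤ c := by
    apply div_nonneg hβ.le
    positivity
  -- maximizer of i ↦ ft i y - ft i x
  obtain ⟨i0, hi0⟩ := Finite.exists_max (fun i => ft i y - ft i x)
  have hsup_y : (⨆ i, (ft i y - ft i x)) ≤ ft i0 y - ft i0 x := ciSup_le hi0
  have key : ∀ j, (⨅ i, (f i x - f i y)) ≤ (ft j x - ft j zstar) + c * ‖y‖ ^ 2 := by
    intro j
    have h1 : ft j zstar - ft j x ≤ ⨆ i, (ft i zstar - ft i x) :=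
      le_ciSup (f := fun i => ft i zstar - ft i x) (Set.Finite.bddAbove (Set.finite_range _)) j
    have h2 : ft j zstar - ft j x ≤ ft i0 y - ft i0 x :=
      h1.trans ((hzstar y).trans hsup_y)
    have h3 : (⨅ i, (f i x - f i y)) ≤ f i0 x - f i0 y :=
      ciInf_le (f := fun i => f i x - f i y) (Set.Finite.bddBelow (Set.finite_range _)) i0
    have e1 := hft i0 x
    have e2 := hft i0 y
    have hx0 : 0 ≤ c * ‖x‖ ^ 2 := by positivity
    nlinarith [h2, h3]
  have h4 : (⨅ i, (f i x - f i y)) - c * ‖y‖ ^ 2 ≤ ⨅ i, (ft i x - ft i zstar) :=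
    le_ciInf fun j => by linarith [key j]
  linarith
end

section
/- Let x be a trajectory solution of (MTRIGS) and, for i = 1,…,m, define W_i : [t₀,∞) → ℝ by W_i(t) := f_i(x(t)) + (β/(2t^p))‖x(t)‖² + (1/2)‖ẋ(t)‖². Then for almost every t ≥ t₀ the function W_i is differentiable at t with W_i'(t) ≤ −(pβ/(2t^{p+1}))‖x(t)‖² − (α/t^q)‖ẋ(t)‖² ≤ 0. Consequently each W_i is nonincreasing on [t₀,∞), and x(t) ∈ L(F, F(x(t₀)) + a) for all t ≥ t₀, where a ∈ ℝ^m is given by a_i := (β/(2t₀^p))‖x(t₀)‖² + (1/2)‖ẋ(t₀)‖² for every i. -/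
open Filter Topology MeasureTheory
open scoped NNReal InnerProductSpace
open Set

/-!
At a time where `ẍ` exists, `W_i` has derivative
`⟪∇f_i(x) + (β/t^p)x + ẍ, ẋ⟫ - (pβ/(2t^{p+1}))‖x‖²`. The vector `∇f_i(x) + (β/t^p)x + ẍ` lies in
the convex set `K(t)`, whose minimal-norm element is `-(α/t^q)ẋ`; the variational inequality for the
projection of `0` onto `K(t)` bounds the inner product by `-(α/t^q)‖ẋ‖²`.

An a.e. nonpositive derivative alone does not make `W_i` nonincreasing; absolute continuity does.
MTRIGS bounds `‖ẍ‖` by continuous quantities, so `ẍ` is locally integrable, `ẋ` is its primitive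
and `W_i` is absolutely continuous on compact intervals; the fundamental theorem of calculus for
absolutely continuous functions then gives monotonicity, and `f_i(x(t)) ≤ W_i(t) ≤ W_i(t₀)`.
-/

namespace AbsolutelyContinuousOnInterval

variable {a b : ℝ}

theorem of_dist_le_mul {X Y : Type*} [PseudoMetricSpace X] [PseudoMetricSpace Y]
    {f : ℝ → X} {g : ℝ → Y} {C : ℝ} (hg : AbsolutelyContinuousOnInterval g a b)
    (hfg : ∀ s ∈ uIcc a b, ∀ r ∈ uIcc a b, dist (f s) (f r) ≤ C * dist (g s) (g r)) :
    AbsolutelyContinuousOnInterval f a b := by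
  unfold AbsolutelyContinuousOnInterval at hg ⊢
  refine squeeze_zero' (Eventually.of_forall fun E => Finset.sum_nonneg fun i _ => dist_nonneg)
    ?_ (by simpa using hg.const_mul C)
  rw [eventually_inf_principal]
  filter_upwards with E hE
  simp only [disjWithin, mem_ofPred_eq] at hE
  rw [Finset.mul_sum]
  gcongr with i hi
  exact hfg _ (hE.1 i hi).1 _ (hE.1 i hi).2

theorem norm_sq {F : Type*} [SeminormedAddCommGroup F] {f : ℝ → F}
    (hf : AbsolutelyContinuousOnInterval f a b) :
    AbsolutelyContinuousOnInterval (fun s => ‖f s‖ ^ 2) a b := by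
  have hn : AbsolutelyContinuousOnInterval (fun s => ‖f s‖) a b :=
    hf.of_dist_le_mul (C := 1) fun s _ r _ => by
      simpa [dist_eq_norm] using dist_norm_norm_le (f s) (f r)
  simpa only [sq] using hn.fun_mul hn

theorem of_hasDerivAt {E : Type*} [NormedAddCommGroup E] [NormedSpace ℝ E] {f f' : ℝ → E}
    (hf : ∀ s ∈ uIcc a b, HasDerivAt f (f' s) s) (hf' : ContinuousOn f' (uIcc a b)) :
    AbsolutelyContinuousOnInterval f a b := by
  obtain ⟨C, hC⟩ := isCompact_uIcc.exists_bound_of_continuousOn hf'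
  refine LipschitzOnWith.absolutelyContinuousOnInterval (K := C.toNNReal) ?_
  refine (convex_uIcc a b).lipschitzOnWith_of_nnnorm_hasDerivWithin_le
    (fun s hs => (hf s hs).hasDerivWithinAt) fun s hs => ?_
  simpa [norm_toNNReal] using Real.toNNReal_le_toNNReal (hC s hs)

theorem of_eq_add_intervalIntegral {E : Type*} [NormedAddCommGroup E] [NormedSpace ℝ E]
    {y g : ℝ → E} {y₀ : E} (hg : IntervalIntegrable g volume a b)
    (hy : ∀ s ∈ uIcc a b, y s = y₀ + ∫ u in a..s, g u) :
    AbsolutelyContinuousOnInterval y a b := by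
  refine (hg.norm.absolutelyContinuousOnInterval_intervalIntegral left_mem_uIcc).of_dist_le_mul
    (C := 1) fun s hs r hr => ?_
  have hint : ∀ c ∈ uIcc a b, IntervalIntegrable g volume a c := fun c hc =>
    hg.mono_set (uIcc_subset_uIcc_left hc)
  rw [hy s hs, hy r hr, dist_add_left, dist_eq_norm, Real.dist_eq, one_mul,
    intervalIntegral.integral_interval_sub_left (hint s hs) (hint r hr),
    intervalIntegral.integral_interval_sub_left (hint s hs).norm (hint r hr).norm]
  exact intervalIntegral.norm_integral_le_abs_integral_norm

theorem le_of_ae_hasDerivAt_nonpos {f : ℝ → ℝ} (hf : AbsolutelyContinuousOnInterval f a b)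
    (hab : a ≤ b) (hd : ∀ᵐ s, s ∈ Icc a b → ∃ d, HasDerivAt f d s ∧ d ≤ 0) : f b ≤ f a := by
  rw [← sub_nonpos, ← hf.integral_deriv_eq_sub, intervalIntegral.integral_of_le hab]
  refine integral_nonpos_of_ae ?_
  rw [EventuallyLE, ae_restrict_iff' measurableSet_Ioc]
  filter_upwards [hd] with s hs hsI
  obtain ⟨d, hfd, hd0⟩ := hs (Ioc_subset_Icc_self hsI)
  simpa [hfd.deriv] using hd0

end AbsolutelyContinuousOnInterval

theorem antitoneOn_Ici_of_ae_hasDerivAt_nonpos {f : ℝ → ℝ} {t₀ : ℝ}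
    (hf : ∀ b, t₀ ≤ b → AbsolutelyContinuousOnInterval f t₀ b)
    (hd : ∀ᵐ s ∂volume.restrict (Ici t₀), ∃ d, HasDerivAt f d s ∧ d ≤ 0) :
    AntitoneOn f (Ici t₀) := by
  intro a ha b hb hab
  rw [ae_restrict_iff' measurableSet_Ici] at hd
  refine ((hf b hb).mono ?_).le_of_ae_hasDerivAt_nonpos hab
    (hd.mono fun s hs hsI => hs (ha.trans hsI.1))
  rw [uIcc_of_le hab, uIcc_of_le hb]
  exact Icc_subset_Icc_left ha

theorem Convex.norm_sq_le_inner_of_forall_norm_le {F : Type*} [NormedAddCommGroup F]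
    [InnerProductSpace ℝ F] {K : Set F} (hK : Convex ℝ K) {v w : F} (hv : v ∈ K) (hw : w ∈ K)
    (hmin : ∀ u ∈ K, ‖v‖ ≤ ‖u‖) : ‖v‖ ^ 2 ≤ ⟪v, w⟫_ℝ := by
  have : Nonempty K := ⟨⟨v, hv⟩⟩
  have hinf : ‖0 - v‖ = ⨅ u : K, ‖0 - (u : F)‖ := by
    simp only [zero_sub, norm_neg]
    exact le_antisymm (le_ciInf fun u => hmin u u.2)
      (ciInf_le (⟨0, forall_mem_range.2 fun u => norm_nonneg _⟩ :
        BddBelow (range fun u : K => ‖(u : F)‖)) ⟨v, hv⟩)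
  have := (norm_eq_iInf_iff_real_inner_le_zero hK hv).1 hinf w hw
  rw [zero_sub, inner_neg_left, inner_sub_right, real_inner_self_eq_norm_sq] at this
  linarith

theorem inner_le_neg_mul_norm_sq_of_minNorm {F ι : Type*} [NormedAddCommGroup F]
    [InnerProductSpace ℝ F] {G : ι → F} {y z u : F} {c : ℝ} (hc : 0 < c)
    (hmem : (-c) • u ∈ (fun g => g + y + z) '' convexHull ℝ (range G))
    (hmin : ∀ w ∈ (fun g => g + y + z) '' convexHull ℝ (range G), ‖c • u‖ ≤ ‖w‖) (i : ι) :
    ⟪G i + y + z, u⟫_ℝ ≤ -c * ‖u‖ ^ 2 := by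
  have hK : Convex ℝ ((fun g => g + y + z) '' convexHull ℝ (range G)) := by
    convert (convex_convexHull ℝ (range G)).translate (y + z) using 2 with g
    abel
  have h := hK.norm_sq_le_inner_of_forall_norm_le hmem
    ⟨G i, subset_convexHull ℝ _ ⟨i, rfl⟩, rfl⟩ (by simpa only [neg_smul, norm_neg] using hmin)
  rw [norm_smul, mul_pow, Real.norm_eq_abs, sq_abs, real_inner_smul_left, real_inner_comm] at h
  nlinarith

theorem norm_le_of_mem_image_add_add_convexHull {F ι : Type*} [NormedAddCommGroup F]
    [NormedSpace ℝ F] [Fintype ι] {G : ι → F} {v y z : F}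
    (h : v ∈ (fun g => g + y + z) '' convexHull ℝ (range G)) :
    ‖z‖ ≤ ‖v‖ + ‖y‖ + ∑ i, ‖G i‖ := by
  obtain ⟨g, hg, rfl⟩ := h
  obtain ⟨_, ⟨i, rfl⟩, hi⟩ := convexHull_exists_dist_ge hg 0
  rw [dist_zero_right, dist_zero_right] at hi
  have hgG : ‖g‖ ≤ ∑ i, ‖G i‖ :=
    hi.trans (Finset.single_le_sum (fun j _ => norm_nonneg (G j)) (Finset.mem_univ i))
  calc ‖z‖ = ‖g + y + z - y - g‖ := by congr 1; abel
    _ ≤ ‖g + y + z‖ + ‖y‖ + ‖g‖ := norm_sub_le_of_le (norm_sub_le _ _) le_rfl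
    _ ≤ _ := by linarith

theorem hasDerivAt_const_div_rpow (c r : ℝ) {t : ℝ} (ht : 0 < t) :
    HasDerivAt (fun s => c / s ^ r) (-(r * c) / t ^ (r + 1)) t := by
  refine ((hasDerivAt_const t c).div (Real.hasDerivAt_rpow_const (Or.inl ht.ne'))
    (Real.rpow_pos_of_pos ht r).ne').congr_deriv ?_
  rw [Real.rpow_sub_one ht.ne', Real.rpow_add_one ht.ne']
  field_simp
  ring

theorem continuousOn_const_div_rpow (c r : ℝ) {s : Set ℝ} (hs : ∀ t ∈ s, 0 < t) :
    ContinuousOn (fun t => c / t ^ r) s := fun t ht =>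
  (hasDerivAt_const_div_rpow c r (hs t ht)).continuousAt.continuousWithinAt

theorem HasGradientAt.comp_hasDerivAt {F : Type*} [NormedAddCommGroup F] [InnerProductSpace ℝ F]
    [CompleteSpace F] {φ : F → ℝ} {g v : F} {x : ℝ → F} {t : ℝ} (hφ : HasGradientAt φ g (x t))
    (hx : HasDerivAt x v t) : HasDerivAt (fun s => φ (x s)) ⟪g, v⟫_ℝ t :=
  (hasGradientAt_iff_hasFDerivAt.1 hφ).comp_hasDerivAt t hx

section Energy

variable {H : Type*} [NormedAddCommGroup H] {φ : H → ℝ} {β p : ℝ} {x x' x'' : ℝ → H}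

noncomputable def tikhonovEnergy (φ : H → ℝ) (β p : ℝ) (x x' : ℝ → H) (s : ℝ) : ℝ :=
  φ (x s) + β / (2 * s ^ p) * ‖x s‖ ^ 2 + (1/2) * ‖x' s‖ ^ 2

theorem le_tikhonovEnergy (hβ : 0 ≤ β) {t : ℝ} (ht : 0 ≤ t) :
    φ (x t) ≤ tikhonovEnergy φ β p x x' t := by
  unfold tikhonovEnergy
  have : 0 ≤ β / (2 * t ^ p) * ‖x t‖ ^ 2 := by positivity
  have : 0 ≤ (1/2) * ‖x' t‖ ^ 2 := by positivity
  linarith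

variable [InnerProductSpace ℝ H] [CompleteSpace H]

theorem hasDerivAt_tikhonovEnergy {g a : H} {t : ℝ} (ht : 0 < t) (hφ : HasGradientAt φ g (x t))
    (hx : HasDerivAt x (x' t) t) (hx' : HasDerivAt x' a t) :
    HasDerivAt (tikhonovEnergy φ β p x x')
      (⟪g + (β / t ^ p) • x t + a, x' t⟫_ℝ - p * β / (2 * t ^ (p + 1)) * ‖x t‖ ^ 2) t := by
  have hc : HasDerivAt (fun s => β / (2 * s ^ p)) (-(p * (β / 2)) / t ^ (p + 1)) t := by
    simpa only [div_div] using hasDerivAt_const_div_rpow (β / 2) p ht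
  refine (((hφ.comp_hasDerivAt hx).add (hc.mul hx.norm_sq)).add
    (hx'.norm_sq.const_mul (1/2))).congr_deriv ?_
  rw [inner_add_left, inner_add_left, real_inner_smul_left, real_inner_comm a]
  field_simp
  ring

theorem absolutelyContinuousOnInterval_tikhonovEnergy (hφ : Differentiable ℝ φ)
    (hφ' : Continuous (gradient φ)) {a b : ℝ} (ha : 0 < a) (hab : a ≤ b)
    (hx : ∀ s ∈ Icc a b, HasDerivAt x (x' s) s) (hx'c : ContinuousOn x' (Icc a b))
    (hx'' : IntervalIntegrable x'' volume a b)
    (hx' : ∀ s ∈ Icc a b, x' s = x' a + ∫ u in a..s, x'' u) :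
    AbsolutelyContinuousOnInterval (tikhonovEnergy φ β p x x') a b := by
  rw [← uIcc_of_le hab] at hx hx'c hx'
  have hpos : ∀ s ∈ uIcc a b, 0 < s := fun s hs => ha.trans_le (uIcc_of_le hab ▸ hs).1
  have hxc : ContinuousOn x (uIcc a b) := fun s hs => (hx s hs).continuousAt.continuousWithinAt
  have hφx : AbsolutelyContinuousOnInterval (fun s => φ (x s)) a b :=
    .of_hasDerivAt (fun s hs => (hφ (x s)).hasGradientAt.comp_hasDerivAt (hx s hs))
      ((hφ'.comp_continuousOn hxc).inner hx'c)
  have hc : AbsolutelyContinuousOnInterval (fun s => β / (2 * s ^ p)) a b := by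
    simp only [← div_div]
    exact .of_hasDerivAt (fun s hs => hasDerivAt_const_div_rpow _ _ (hpos s hs))
      (continuousOn_const_div_rpow _ _ hpos)
  have hxn := (AbsolutelyContinuousOnInterval.of_hasDerivAt hx hx'c).norm_sq
  have hx'n := (AbsolutelyContinuousOnInterval.of_eq_add_intervalIntegral hx'' hx').norm_sq
  exact (hφx.fun_add (hc.fun_mul hxn)).fun_add (hx'n.const_mul (1/2))

end Energy

section Trajectory

variable {H : Type*} [NormedAddCommGroup H] [InnerProductSpace ℝ H] [CompleteSpace H]
  {ι : Type*} {f : ι → H → ℝ} {t₀ α β q p : ℝ} {x x' x'' : ℝ → H}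

/-- The set `K(t)` of (MTRIGS). -/
noncomputable def mtrigsSet (f : ι → H → ℝ) (β p : ℝ) (x x'' : ℝ → H) (t : ℝ) : Set H :=
  (fun g => g + (β / t ^ p) • x t + x'' t) '' convexHull ℝ (range fun i => gradient (f i) (x t))

theorem intervalIntegrable_of_ae_mem_mtrigsSet [Fintype ι] {b : ℝ} (ht₀ : 0 < t₀)
    (hb : t₀ ≤ b) (hgrad : ∀ i, Continuous (gradient (f i))) (hxc : ContinuousOn x (Ici t₀))
    (hx'c : ContinuousOn x' (Ici t₀)) (hx''m : AEStronglyMeasurable x'' volume)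
    (hmem : ∀ᵐ t ∂volume.restrict (Ici t₀), (-(α / t ^ q)) • x' t ∈ mtrigsSet f β p x x'' t) :
    IntervalIntegrable x'' volume t₀ b := by
  rw [intervalIntegrable_iff_integrableOn_Icc_of_le hb]
  have hpos : ∀ t ∈ Icc t₀ b, 0 < t := fun t ht => ht₀.trans_le ht.1
  have hxc : ContinuousOn x (Icc t₀ b) := hxc.mono Icc_subset_Ici_self
  have hM : ContinuousOn (fun t => ‖(-(α / t ^ q)) • x' t‖ + ‖(β / t ^ p) • x t‖
      + ∑ i, ‖gradient (f i) (x t)‖) (Icc t₀ b) :=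
    ((((continuousOn_const_div_rpow α q hpos).neg.smul (hx'c.mono Icc_subset_Ici_self)).norm.add
      ((continuousOn_const_div_rpow β p hpos).smul hxc).norm).add
      (continuousOn_finsetSum _ fun i _ => ((hgrad i).comp_continuousOn hxc).norm))
  exact hM.integrableOn_Icc.mono' hx''m.restrict
    ((ae_restrict_of_ae_restrict_of_subset Icc_subset_Ici_self hmem).mono
      fun t ht => norm_le_of_mem_image_add_add_convexHull ht)

theorem ae_exists_hasDerivAt_tikhonovEnergy_le (hdiff : ∀ i, Differentiable ℝ (f i))
    (ht₀ : 0 < t₀) (hα : 0 < α) (hβ : 0 < β) (hp : 0 < p)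
    (hx : ∀ t ∈ Ici t₀, HasDerivAt x (x' t) t)
    (hx'' : ∀ᵐ t ∂volume.restrict (Ici t₀), HasDerivAt x' (x'' t) t)
    (hK : ∀ᵐ t ∂volume.restrict (Ici t₀), (-(α / t ^ q)) • x' t ∈ mtrigsSet f β p x x'' t ∧
      ∀ w ∈ mtrigsSet f β p x x'' t, ‖(α / t ^ q) • x' t‖ ≤ ‖w‖) (i : ι) :
    ∀ᵐ t ∂volume.restrict (Ici t₀), ∃ d,
      HasDerivAt (tikhonovEnergy (f i) β p x x') d t ∧
      d ≤ -(p * β / (2 * t ^ (p + 1))) * ‖x t‖ ^ 2 - α / t ^ q * ‖x' t‖ ^ 2 ∧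
      -(p * β / (2 * t ^ (p + 1))) * ‖x t‖ ^ 2 - α / t ^ q * ‖x' t‖ ^ 2 ≤ 0 := by
  filter_upwards [hx'', hK, ae_restrict_mem measurableSet_Ici] with t hx''t ⟨hmem, hmin⟩ ht
  have htpos : 0 < t := ht₀.trans_le ht
  have hc : 0 < α / t ^ q := div_pos hα (Real.rpow_pos_of_pos htpos q)
  have hinner := inner_le_neg_mul_norm_sq_of_minNorm hc hmem hmin i
  have hxdamp : 0 ≤ p * β / (2 * t ^ (p + 1)) * ‖x t‖ ^ 2 := by positivity
  refine ⟨_, hasDerivAt_tikhonovEnergy htpos (hdiff i (x t)).hasGradientAt (hx t ht) hx''t,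
    by linarith, by nlinarith [sq_nonneg ‖x' t‖]⟩

end Trajectory

theorem stmt_10_general
    {H : Type*} [NormedAddCommGroup H] [InnerProductSpace ℝ H] [CompleteSpace H]
    {m : ℕ} (f : Fin m → H → ℝ)
    (hdiff : ∀ i, Differentiable ℝ (f i))
    (hlip : ∀ i, ∃ L : ℝ≥0, LipschitzWith L (gradient (f i)))
    (t₀ α β q p : ℝ) (ht₀ : 0 < t₀) (hα : 0 < α) (hβ : 0 < β)
    (hp : p ∈ Set.Ioc (0:ℝ) 2)
    (x x' x'' : ℝ → H)
    (hx : ∀ t ∈ Set.Ici t₀, HasDerivAt x (x' t) t)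
    (hx'c : ContinuousOn x' (Set.Ici t₀))
    (hx''m : StronglyMeasurable x'')
    (hx'int : ∀ t ∈ Set.Ici t₀, x' t = x' t₀ + ∫ s in t₀..t, x'' s)
    (hx'' : ∀ᵐ t ∂(volume.restrict (Set.Ici t₀)), HasDerivAt x' (x'' t) t)
    (hMTRIGS : ∀ᵐ t ∂(volume.restrict (Set.Ici t₀)),
      ((-(α / t ^ q)) • x' t ∈
        (fun g => g + (β / t ^ p) • x t + x'' t) ''
          (convexHull ℝ (Set.range fun i => gradient (f i) (x t)))) ∧
      (∀ w ∈ (fun g => g + (β / t ^ p) • x t + x'' t) ''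
          (convexHull ℝ (Set.range fun i => gradient (f i) (x t))),
        ‖(α / t ^ q) • x' t‖ ≤ ‖w‖)) :
    (∀ i : Fin m, ∀ᵐ t ∂(volume.restrict (Set.Ici t₀)), ∃ d : ℝ,
      HasDerivAt (fun s => f i (x s) + β / (2 * s ^ p) * ‖x s‖ ^ 2
        + (1/2) * ‖x' s‖ ^ 2) d t ∧
      d ≤ -(p * β / (2 * t ^ (p + 1))) * ‖x t‖ ^ 2 - α / t ^ q * ‖x' t‖ ^ 2 ∧
      -(p * β / (2 * t ^ (p + 1))) * ‖x t‖ ^ 2 - α / t ^ q * ‖x' t‖ ^ 2 ≤ 0) ∧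
    (∀ i : Fin m, AntitoneOn
      (fun s => f i (x s) + β / (2 * s ^ p) * ‖x s‖ ^ 2 + (1/2) * ‖x' s‖ ^ 2)
      (Set.Ici t₀)) ∧
    (∀ t ∈ Set.Ici t₀, ∀ i : Fin m, f i (x t) ≤ f i (x t₀)
      + (β / (2 * t₀ ^ p) * ‖x t₀‖ ^ 2 + (1/2) * ‖x' t₀‖ ^ 2)) := by
  have hgrad : ∀ i, Continuous (gradient (f i)) := fun i => (hlip i).choose_spec.continuous
  have hxc : ContinuousOn x (Ici t₀) := fun t ht => (hx t ht).continuousAt.continuousWithinAt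
  have hderiv := ae_exists_hasDerivAt_tikhonovEnergy_le hdiff ht₀ hα hβ hp.1 hx hx'' hMTRIGS
  have hanti : ∀ i, AntitoneOn (tikhonovEnergy (f i) β p x x') (Ici t₀) := fun i =>
    antitoneOn_Ici_of_ae_hasDerivAt_nonpos
      (fun b hb => absolutelyContinuousOnInterval_tikhonovEnergy (hdiff i) (hgrad i) ht₀ hb
        (fun s hs => hx s hs.1) (hx'c.mono Icc_subset_Ici_self)
        (intervalIntegrable_of_ae_mem_mtrigsSet ht₀ hb hgrad hxc hx'c
          hx''m.aestronglyMeasurable (hMTRIGS.mono fun _ h => h.1))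
        (fun s hs => hx'int s hs.1))
      ((hderiv i).mono fun _ ⟨d, hd, hdR, hR⟩ => ⟨d, hd, hdR.trans hR⟩)
  refine ⟨hderiv, hanti, fun t ht i => ?_⟩
  calc f i (x t) ≤ tikhonovEnergy (f i) β p x x' t := le_tikhonovEnergy hβ.le (ht₀.le.trans ht)
    _ ≤ tikhonovEnergy (f i) β p x x' t₀ := hanti i self_mem_Ici ht ht
    _ = _ := by rw [tikhonovEnergy, add_assoc]

/-- For a trajectory solution `x` of (MTRIGS), each energy
`W_i(t) = f_i(x(t)) + (β/(2t^p))‖x(t)‖² + (1/2)‖ẋ(t)‖²` is differentiable at a.e. `t ≥ t₀` with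
`W_i'(t) ≤ −(pβ/(2t^{p+1}))‖x(t)‖² − (α/t^q)‖ẋ(t)‖² ≤ 0`; each `W_i` is nonincreasing on
`[t₀,∞)`; and `x(t) ∈ L(F, F(x(t₀)) + a)` for all `t ≥ t₀`, where
`a_i = (β/(2t₀^p))‖x(t₀)‖² + (1/2)‖ẋ(t₀)‖²`. -/
theorem stmt_10
    {H : Type*} [NormedAddCommGroup H] [InnerProductSpace ℝ H] [CompleteSpace H]
    {m : ℕ} (hm : 0 < m) (f : Fin m → H → ℝ)
    (hconv : ∀ i, ConvexOn ℝ Set.univ (f i))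
    (hdiff : ∀ i, Differentiable ℝ (f i))
    (hlip : ∀ i, ∃ L : ℝ≥0, LipschitzWith L (gradient (f i)))
    (t₀ α β q p : ℝ) (ht₀ : 0 < t₀) (hα : 0 < α) (hβ : 0 < β)
    (hq : q ∈ Set.Ioc (0:ℝ) 1) (hp : p ∈ Set.Ioc (0:ℝ) 2)
    (x x' x'' : ℝ → H)
    (hx : ∀ t ∈ Set.Ici t₀, HasDerivAt x (x' t) t)
    (hx'c : ContinuousOn x' (Set.Ici t₀))
    (hx''m : StronglyMeasurable x'')
    (hx'int : ∀ t ∈ Set.Ici t₀, x' t = x' t₀ + ∫ s in t₀..t, x'' s)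
    (hx'' : ∀ᵐ t ∂(volume.restrict (Set.Ici t₀)), HasDerivAt x' (x'' t) t)
    (hMTRIGS : ∀ᵐ t ∂(volume.restrict (Set.Ici t₀)),
      ((-(α / t ^ q)) • x' t ∈
        (fun g => g + (β / t ^ p) • x t + x'' t) ''
          (convexHull ℝ (Set.range fun i => gradient (f i) (x t)))) ∧
      (∀ w ∈ (fun g => g + (β / t ^ p) • x t + x'' t) ''
          (convexHull ℝ (Set.range fun i => gradient (f i) (x t))),
        ‖(α / t ^ q) • x' t‖ ≤ ‖w‖)) :
    (∀ i : Fin m, ∀ᵐ t ∂(volume.restrict (Set.Ici t₀)), ∃ d : ℝ,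
      HasDerivAt (fun s => f i (x s) + β / (2 * s ^ p) * ‖x s‖ ^ 2
        + (1/2) * ‖x' s‖ ^ 2) d t ∧
      d ≤ -(p * β / (2 * t ^ (p + 1))) * ‖x t‖ ^ 2 - α / t ^ q * ‖x' t‖ ^ 2 ∧
      -(p * β / (2 * t ^ (p + 1))) * ‖x t‖ ^ 2 - α / t ^ q * ‖x' t‖ ^ 2 ≤ 0) ∧
    (∀ i : Fin m, AntitoneOn
      (fun s => f i (x s) + β / (2 * s ^ p) * ‖x s‖ ^ 2 + (1/2) * ‖x' s‖ ^ 2)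
      (Set.Ici t₀)) ∧
    (∀ t ∈ Set.Ici t₀, ∀ i : Fin m, f i (x t) ≤ f i (x t₀)
      + (β / (2 * t₀ ^ p) * ‖x t₀‖ ^ 2 + (1/2) * ‖x' t₀‖ ^ 2)) :=
  stmt_10_general f hdiff hlip t₀ α β q p ht₀ hα hβ hp x x' x'' hx hx'c hx''m hx'int hx'' hMTRIGS
end

section
/- Let q ∈ (0,1), let x be a trajectory solution of (MTRIGS), λ > 0, r ∈ [q,1) and z ∈ H. With f_{t,i}(u) := f_i(u) + (β/(2t^p))‖u‖², define μ_r(t) := λ/t^r − 2r/t and E(t) := t^{2r}·min_{i=1,…,m}(f_{t,i}(x(t)) − f_{t,i}(z)) + (1/2)‖λ(x(t) − z) + t^r ẋ(t)‖² + (λ/2)(r t^{r−1} + α t^{r−q} − 2λ)‖x(t) − z‖². Then E is differentiable almost everywhere and, for almost every t ≥ t₁ := max((2r/λ)^{1/(1−r)}, t₀): E'(t) + μ_r(t)·E(t) ≤ t^r((3/2)λ − α t^{r−q})‖ẋ(t)‖² + (pβ t^{2r}/(2t^{p+1}))‖z‖² + (λ/2)(3λr/t − λ²/t^r + λα/t^q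 − β/t^{p−r})‖x(t) − z‖². -/
/-!
Let `Φ(t) = minᵢ (f_{t,i}(x t) - f_{t,i}(z))`. Two branches of the minimum that tie at `t` with
different derivatives can only tie at isolated, hence countably many, times; so for almost every
`t` the minimum is differentiable with the derivative of any active branch.

At such a `t` the selection in (MTRIGS) writes `ẍ = -(α/t^q) ẋ - g - (β/t^p) x` with `g` in the
convex hull of the gradients. Convexity of the `fᵢ` gives
`Φ ≤ ⟪x - z, g⟫ + β/(2t^p) (‖x‖² - ‖z‖²)`, and since `-(α/t^q) ẋ` is the point of minimal norm
of a translate of that hull (a projection of the origin), `⟪ẋ, ∇fᵢ(x)⟫ ≤ ⟪ẋ, g⟫` for every `i`.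
Expanding `E' + μ_r E` then leaves the right-hand side plus four terms, each nonpositive by one
of these two inequalities or by the signs of the parameters.
-/

open Filter Topology MeasureTheory
open scoped NNReal InnerProductSpace

lemma ae_eq_zero_of_hasDerivAt_of_eq_zero (u : ℝ → ℝ) :
    ∀ᵐ t, u t = 0 → ∀ d, HasDerivAt u d t → d = 0 := by
  have hc : {t | u t = 0 ∧ ∃ d ≠ 0, HasDerivAt u d t}.Countable := by
    refine countable_setOfPred_isolated_right_within.mono fun t ht => show _ ∧ _ from ⟨ht, ?_⟩
    obtain ⟨-, d, hd, hu⟩ := ht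
    rw [← eventually_false_iff_eq_bot]
    have hsub : {s | u s = 0 ∧ ∃ d ≠ 0, HasDerivAt u d s} ∩ Set.Ioi t ⊆ {t}ᶜ :=
      fun s hs => hs.2.ne'
    filter_upwards [nhdsWithin_mono t hsub (hu.eventually_ne hd (c := 0)),
      self_mem_nhdsWithin] with s hs hsS using hs hsS.1.1
  filter_upwards [hc.ae_notMem volume] with t ht hut d hd
  by_contra hd0
  exact ht ⟨hut, d, hd0, hd⟩

lemma hasDerivAt_ciInf {ι : Type*} [Finite ι] [Nonempty ι] {g : ι → ℝ → ℝ}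
    {d : ι → ℝ} {t D : ℝ} (hg : ∀ i, HasDerivAt (g i) (d i) t)
    (hD : ∀ i, g i t = ⨅ j, g j t → d i = D) :
    HasDerivAt (fun s => ⨅ i, g i s) D t := by
  obtain ⟨i₀, hi₀⟩ := exists_eq_ciInf_of_finite (f := fun i => g i t)
  set m := ⨅ i, g i t
  rw [hasDerivAt_iff_isLittleO, Asymptotics.isLittleO_iff]
  intro ε hε
  have hclose : ∀ i, g i t = m → ∀ᶠ s in 𝓝 t, |g i s - (m + (s - t) * D)| ≤ ε * |s - t| := by
    intro i hi
    filter_upwards [(hasDerivAt_iff_isLittleO.1 (hg i)).def hε] with s hs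
    rw [hD i hi, hi] at hs
    simpa [sub_sub, mul_comm] using hs
  have hlow : ∀ i, ∀ᶠ s in 𝓝 t, m + (s - t) * D - ε * |s - t| ≤ g i s := by
    intro i
    rcases eq_or_lt_of_le (ciInf_le (Set.finite_range fun j => g j t).bddBelow i) with hi | hi
    · filter_upwards [hclose i hi.symm] with s hs
      linarith [(abs_le.1 hs).1]
    · -- an inactive branch stays above the minimum near `t`
      have hcont : ContinuousAt (fun s => g i s - (m + (s - t) * D - ε * |s - t|)) t :=
        (hg i).continuousAt.sub (by fun_prop)
      have hpos : 0 < g i t - (m + (t - t) * D - ε * |t - t|) := by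
        simp only [sub_self, zero_mul, abs_zero, mul_zero, add_zero, sub_zero]
        linarith
      filter_upwards [hcont.eventually (lt_mem_nhds hpos)] with s hs
      linarith
  filter_upwards [eventually_all.2 hlow, hclose i₀ hi₀] with s hlow hup
  rw [Real.norm_eq_abs, Real.norm_eq_abs, smul_eq_mul, abs_le]
  constructor
  · linarith [le_ciInf hlow]
  · linarith [ciInf_le (Set.finite_range fun j => g j s).bddBelow i₀, (abs_le.1 hup).2]

lemma ae_hasDerivAt_ciInf {ι : Type*} [Finite ι] [Nonempty ι] (g : ι → ℝ → ℝ) :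
    ∀ᵐ t, ∀ d : ι → ℝ, (∀ i, HasDerivAt (g i) (d i) t) →
      ∀ i, g i t = ⨅ j, g j t → HasDerivAt (fun s => ⨅ j, g j s) (d i) t := by
  filter_upwards [ae_all_iff.2 fun i => ae_all_iff.2 fun j =>
    ae_eq_zero_of_hasDerivAt_of_eq_zero (g i - g j)] with t ht d hd i hi
  refine hasDerivAt_ciInf hd fun j hj => ?_
  have := ht j i (by simp [hi, hj]) _ ((hd j).sub (hd i))
  linarith

lemma ConvexOn.add_apply_sub_le_of_hasFDerivAt {E : Type*} [NormedAddCommGroup E]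
    [NormedSpace ℝ E] {f : E → ℝ} {f' : E →L[ℝ] ℝ} {x : E} (hf : ConvexOn ℝ Set.univ f)
    (hf' : HasFDerivAt f f' x) (y : E) : f x + f' (y - x) ≤ f y := by
  have hline : ConvexOn ℝ Set.univ (f ∘ (AffineMap.lineMap x y : ℝ →ᵃ[ℝ] E)) := by
    simpa using hf.comp_affineMap (AffineMap.lineMap x y)
  have hderiv : HasDerivAt (f ∘ (AffineMap.lineMap x y : ℝ →ᵃ[ℝ] E)) (f' (y - x)) 0 := by
    have hf'0 : HasFDerivAt f f' (AffineMap.lineMap x y (0 : ℝ)) := by simpa using hf'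
    exact hf'0.comp_hasDerivAt 0 AffineMap.hasDerivAt_lineMap
  have := hline.le_slope_of_hasDerivAt (Set.mem_univ 0) (Set.mem_univ 1) one_pos hderiv
  simp only [slope_def_field, Function.comp_apply, AffineMap.lineMap_apply_zero,
    AffineMap.lineMap_apply_one, sub_zero, div_one] at this
  linarith

lemma ConcaveOn.ciInf_le_of_mem_convexHull {E ι : Type*} [AddCommGroup E] [Module ℝ E]
    [Finite ι] {ℓ : E → ℝ} (hℓ : ConcaveOn ℝ Set.univ ℓ) {a : ι → ℝ} {v : ι → E}
    (hav : ∀ i, a i ≤ ℓ (v i)) {y : E} (hy : y ∈ convexHull ℝ (Set.range v)) :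
    ⨅ i, a i ≤ ℓ y := by
  refine (convexHull_min ?_ (hℓ.convex_ge (⨅ i, a i)) hy).2
  rintro _ ⟨i, rfl⟩
  exact ⟨trivial, (ciInf_le (Set.finite_range a).bddBelow i).trans (hav i)⟩

lemma Convex.real_inner_sub_nonneg_of_isMinOn_norm {F : Type*} [NormedAddCommGroup F]
    [InnerProductSpace ℝ F] {K : Set F} (hK : Convex ℝ K) {v : F} (hv : v ∈ K)
    (hmin : IsMinOn norm K v) {w : F} (hw : w ∈ K) : 0 ≤ ⟪v, w - v⟫_ℝ := by
  have : Nonempty K := ⟨⟨v, hv⟩⟩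
  have hinf : ‖0 - v‖ = ⨅ w : K, ‖0 - (w : F)‖ := by
    refine le_antisymm (le_ciInf fun w => by simpa using hmin w.2) ?_
    exact ciInf_le ⟨0, Set.forall_mem_range.2 fun w : K => norm_nonneg (0 - (w : F))⟩ ⟨v, hv⟩
  have := (norm_eq_iInf_iff_real_inner_le_zero hK hv).1 hinf w hw
  rw [zero_sub, inner_neg_left] at this
  linarith

section
variable {H : Type*} [NormedAddCommGroup H] [InnerProductSpace ℝ H]

lemma hasDerivAt_regularized_sub [CompleteSpace H] {f : H → ℝ} {x : ℝ → H} {v : H}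
    {t β p : ℝ} (z : H) (ht : 0 < t) (hf : DifferentiableAt ℝ f (x t)) (hx : HasDerivAt x v t) :
    HasDerivAt
      (fun s => (f (x s) + β / (2 * s ^ p) * ‖x s‖ ^ 2) - (f z + β / (2 * s ^ p) * ‖z‖ ^ 2))
      (⟪v, gradient f (x t)⟫_ℝ + β / t ^ p * ⟪x t, v⟫_ℝ
        - p * β / (2 * t ^ (p + 1)) * (‖x t‖ ^ 2 - ‖z‖ ^ 2)) t := by
  have hc : HasDerivAt (fun s : ℝ => β / (2 * s ^ p)) (-(p * β / (2 * t ^ (p + 1)))) t := by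
    have hden := (Real.hasDerivAt_rpow_const (p := p) (Or.inl ht.ne')).const_mul 2
    refine ((hasDerivAt_const t β).div hden (by positivity)).congr_deriv ?_
    rw [Real.rpow_add ht, Real.rpow_sub ht, Real.rpow_one]
    field_simp
    ring
  have hfx := hf.hasGradientAt.hasFDerivAt.comp_hasDerivAt t hx
  refine ((hfx.add (hc.mul hx.norm_sq)).sub
    ((hasDerivAt_const t (f z)).add (hc.mul_const _))).congr_deriv ?_
  simp only [InnerProductSpace.toDual_apply_apply, real_inner_comm v]
  ring

lemma ciInf_regularized_sub_le_real_inner [CompleteSpace H] {ι : Type*} [Finite ι]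
    {f : ι → H → ℝ} {y : H} (hconv : ∀ i, ConvexOn ℝ Set.univ (f i))
    (hdiff : ∀ i, DifferentiableAt ℝ (f i) y) (c : ℝ) (z : H) {g : H}
    (hg : g ∈ convexHull ℝ (Set.range fun i => gradient (f i) y)) :
    ⨅ i, ((f i y + c * ‖y‖ ^ 2) - (f i z + c * ‖z‖ ^ 2))
      ≤ ⟪y - z, g⟫_ℝ + c * (‖y‖ ^ 2 - ‖z‖ ^ 2) := by
  refine ConcaveOn.ciInf_le_of_mem_convexHull (ℓ := fun w => ⟪y - z, w⟫_ℝ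
    + c * (‖y‖ ^ 2 - ‖z‖ ^ 2)) ?_ (fun i => ?_) hg
  · exact ((innerSL ℝ (y - z)).toLinearMap.concaveOn convex_univ).add_const _
  · have := (hconv i).add_apply_sub_le_of_hasFDerivAt (hdiff i).hasGradientAt.hasFDerivAt z
    rw [InnerProductSpace.toDual_apply_apply, inner_sub_right] at this
    rw [real_inner_comm, inner_sub_right]
    linarith

lemma exists_real_inner_le_of_isMinOn_norm {C : Set H} (hC : Convex ℝ C) {a b v : H} {κ : ℝ}
    (hκ : 0 < κ) (hmem : (-κ) • v ∈ (fun g => g + a + b) '' C)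
    (hmin : ∀ w ∈ (fun g => g + a + b) '' C, ‖κ • v‖ ≤ ‖w‖) :
    ∃ g ∈ C, b = (-κ) • v - g - a ∧ ∀ y ∈ C, ⟪v, y⟫_ℝ ≤ ⟪v, g⟫_ℝ := by
  obtain ⟨g, hg, hgv⟩ := hmem
  replace hgv : g + a + b = (-κ) • v := hgv
  refine ⟨g, hg, by rw [← hgv]; abel, fun y hy => ?_⟩
  have hK : Convex ℝ ((fun g => g + a + b) '' C) := by
    simpa only [add_assoc, add_comm _ (a + b)] using hC.translate (a + b)
  have hminK : IsMinOn norm ((fun g => g + a + b) '' C) ((-κ) • v) :=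
    isMinOn_iff.2 fun w hw => by simpa only [neg_smul, norm_neg] using hmin w hw
  have := hK.real_inner_sub_nonneg_of_isMinOn_norm ⟨g, hg, hgv⟩ hminK ⟨y, hy, rfl⟩
  have hyg : (fun g => g + a + b) y - (-κ) • v = y - g := by rw [← hgv]; dsimp only; abel
  rw [hyg, real_inner_smul_left, inner_sub_right] at this
  nlinarith

/-- `Φ` stands for the minimum of the regularized gaps and `G` for `⟪ẋ, ∇fᵢ(x)⟫` at an active
branch `i`. -/
lemma exists_hasDerivAt_energy_le {x x' : ℝ → H} {E Φ : ℝ → ℝ} {t α β p q r lam G : ℝ} {z g : H}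
    (ht : 0 < t) (hα : 0 ≤ α) (hβ : 0 ≤ β) (hp : 0 ≤ p) (hq : 0 ≤ q) (hr : 0 ≤ r)
    (hlam : 0 ≤ lam)
    (hE : ∀ s, E s = s ^ (2 * r) * Φ s + (1/2) * ‖lam • (x s - z) + s ^ r • x' s‖ ^ 2
        + lam / 2 * (r * s ^ (r - 1) + α * s ^ (r - q) - 2 * lam) * ‖x s - z‖ ^ 2)
    (hx : HasDerivAt x (x' t) t)
    (hx' : HasDerivAt x' (-(α / t ^ q) • x' t - g - (β / t ^ p) • x t) t)
    (hΦ : HasDerivAt Φ (G + β / t ^ p * ⟪x t, x' t⟫_ℝ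
      - p * β / (2 * t ^ (p + 1)) * (‖x t‖ ^ 2 - ‖z‖ ^ 2)) t)
    (hG : G ≤ ⟪x' t, g⟫_ℝ)
    (hΦle : Φ t ≤ ⟪x t - z, g⟫_ℝ + β / (2 * t ^ p) * (‖x t‖ ^ 2 - ‖z‖ ^ 2)) :
    ∃ d, HasDerivAt E d t ∧
      d + (lam / t ^ r - 2 * r / t) * E t ≤
        t ^ r * (3 / 2 * lam - α * t ^ (r - q)) * ‖x' t‖ ^ 2
          + p * β * t ^ (2 * r) / (2 * t ^ (p + 1)) * ‖z‖ ^ 2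
          + lam / 2 * (3 * lam * r / t - lam ^ 2 / t ^ r + lam * α / t ^ q
              - β / t ^ (p - r)) * ‖x t - z‖ ^ 2 := by
  have hpow (e : ℝ) : HasDerivAt (fun s : ℝ => s ^ e) (e * t ^ (e - 1)) t :=
    Real.hasDerivAt_rpow_const (Or.inl ht.ne')
  have hγ := (((hpow (r - 1)).const_mul r).add ((hpow (r - q)).const_mul α)).sub_const (2 * lam)
  have hd := (((hpow (2 * r)).mul hΦ).add
    ((((hx.sub_const z).const_smul lam).add ((hpow r).smul hx')).norm_sq.const_mul (1 / 2))).add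
    ((hγ.const_mul (lam / 2)).mul (hx.sub_const z).norm_sq)
  rw [show E = _ from funext hE]
  refine ⟨_, hd, ?_⟩
  have hT := Real.rpow_pos_of_pos ht r
  have hb := Real.rpow_pos_of_pos ht q
  have hc := Real.rpow_pos_of_pos ht p
  calc _ = t ^ r * (3 / 2 * lam - α * t ^ (r - q)) * ‖x' t‖ ^ 2
          + p * β * t ^ (2 * r) / (2 * t ^ (p + 1)) * ‖z‖ ^ 2
          + lam / 2 * (3 * lam * r / t - lam ^ 2 / t ^ r + lam * α / t ^ q
              - β / t ^ (p - r)) * ‖x t - z‖ ^ 2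
          + lam * t ^ r * (Φ t - ⟪x t - z, g⟫_ℝ - β / (2 * t ^ p) * (‖x t‖ ^ 2 - ‖z‖ ^ 2))
          + t ^ r * t ^ r * (G - ⟪x' t, g⟫_ℝ)
          - t ^ r * t ^ r * (p * β / (2 * t ^ p * t)) * ‖x t‖ ^ 2
          - lam / 2 * (r * (r + 1) * t ^ r / (t * t) + α * (r + q) * t ^ r / (t ^ q * t))
            * ‖x t - z‖ ^ 2 := by
        simp only [Pi.add_apply, Pi.smul_apply, Pi.smul_apply', norm_add_sq_real, norm_sub_sq_real,
          inner_add_left, inner_add_right, inner_sub_left, inner_sub_right, real_inner_smul_left,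
          real_inner_smul_right, norm_smul, real_inner_self_eq_norm_sq, mul_pow,
          Real.norm_eq_abs, sq_abs, real_inner_comm (x t) z, real_inner_comm (x t) (x' t)]
        simp only [Real.rpow_sub ht, Real.rpow_add ht, Real.rpow_one, two_mul]
        field_simp
        ring
    _ ≤ _ := by
        have hgap : lam * t ^ r * (Φ t - ⟪x t - z, g⟫_ℝ
            - β / (2 * t ^ p) * (‖x t‖ ^ 2 - ‖z‖ ^ 2)) ≤ 0 :=
          mul_nonpos_of_nonneg_of_nonpos (by positivity) (by linarith)
        have hdescent : t ^ r * t ^ r * (G - ⟪x' t, g⟫_ℝ) ≤ 0 :=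
          mul_nonpos_of_nonneg_of_nonpos (by positivity) (by linarith)
        have hreg : 0 ≤ t ^ r * t ^ r * (p * β / (2 * t ^ p * t)) * ‖x t‖ ^ 2 := by
          positivity
        have hdamp : 0 ≤ lam / 2 * (r * (r + 1) * t ^ r / (t * t)
            + α * (r + q) * t ^ r / (t ^ q * t)) * ‖x t - z‖ ^ 2 := by
          positivity
        linarith

end

theorem stmt_13_general
    {H : Type*} [NormedAddCommGroup H] [InnerProductSpace ℝ H] [CompleteSpace H]
    {m : ℕ} (hm : 0 < m) (f : Fin m → H → ℝ)
    (hconv : ∀ i, ConvexOn ℝ Set.univ (f i))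
    (hdiff : ∀ i, Differentiable ℝ (f i))
    (t₀ α β q p : ℝ) (ht₀ : 0 < t₀) (hα : 0 < α) (hβ : 0 < β)
    (hq : q ∈ Set.Ioo (0:ℝ) 1) (hp : p ∈ Set.Ioc (0:ℝ) 2)
    (x x' x'' : ℝ → H)
    (hx : ∀ t ∈ Set.Ici t₀, HasDerivAt x (x' t) t)
    (hx'' : ∀ᵐ t ∂(volume.restrict (Set.Ici t₀)), HasDerivAt x' (x'' t) t)
    (hMTRIGS : ∀ᵐ t ∂(volume.restrict (Set.Ici t₀)),
      ((-(α / t ^ q)) • x' t ∈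
        (fun g => g + (β / t ^ p) • x t + x'' t) ''
          (convexHull ℝ (Set.range fun i => gradient (f i) (x t)))) ∧
      (∀ w ∈ (fun g => g + (β / t ^ p) • x t + x'' t) ''
          (convexHull ℝ (Set.range fun i => gradient (f i) (x t))),
        ‖(α / t ^ q) • x' t‖ ≤ ‖w‖))
    (lam : ℝ) (hlam : 0 < lam) (r : ℝ) (hr : r ∈ Set.Ico q 1) (z : H)
    (E : ℝ → ℝ)
    (hE : ∀ t : ℝ, E t =
      t ^ (2 * r) * (⨅ i, ((f i (x t) + β / (2 * t ^ p) * ‖x t‖ ^ 2)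
          - (f i z + β / (2 * t ^ p) * ‖z‖ ^ 2)))
        + (1/2) * ‖lam • (x t - z) + t ^ r • x' t‖ ^ 2
        + lam / 2 * (r * t ^ (r - 1) + α * t ^ (r - q) - 2 * lam) * ‖x t - z‖ ^ 2) :
    ∀ᵐ t ∂(volume.restrict (Set.Ici (max ((2 * r / lam) ^ ((1:ℝ) / (1 - r))) t₀))),
      ∃ d : ℝ, HasDerivAt E d t ∧
        d + (lam / t ^ r - 2 * r / t) * E t ≤
          t ^ r * (3 / 2 * lam - α * t ^ (r - q)) * ‖x' t‖ ^ 2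
          + p * β * t ^ (2 * r) / (2 * t ^ (p + 1)) * ‖z‖ ^ 2
          + lam / 2 * (3 * lam * r / t - lam ^ 2 / t ^ r + lam * α / t ^ q
              - β / t ^ (p - r)) * ‖x t - z‖ ^ 2 := by
  have : Nonempty (Fin m) := ⟨⟨0, hm⟩⟩
  have hsub : Set.Ici (max ((2 * r / lam) ^ ((1:ℝ) / (1 - r))) t₀) ⊆ Set.Ici t₀ :=
    Set.Ici_subset_Ici.2 (le_max_right _ _)
  filter_upwards [ae_restrict_mem measurableSet_Ici, ae_restrict_of_ae_restrict_of_subset hsub hx'',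
    ae_restrict_of_ae_restrict_of_subset hsub hMTRIGS,
    ae_restrict_of_ae (ae_hasDerivAt_ciInf fun i s =>
      (f i (x s) + β / (2 * s ^ p) * ‖x s‖ ^ 2) - (f i z + β / (2 * s ^ p) * ‖z‖ ^ 2))]
    with t ht hx''t ⟨hmem, hmin⟩ hΦ
  have ht₀t : t ∈ Set.Ici t₀ := hsub ht
  have htpos : 0 < t := ht₀.trans_le ht₀t
  obtain ⟨g, hg, hx''g, hdescent⟩ := exists_real_inner_le_of_isMinOn_norm (convex_convexHull ℝ _)
    (div_pos hα (Real.rpow_pos_of_pos htpos q)) hmem hmin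
  obtain ⟨i₀, hi₀⟩ := exists_eq_ciInf_of_finite (f := fun i =>
    (f i (x t) + β / (2 * t ^ p) * ‖x t‖ ^ 2) - (f i z + β / (2 * t ^ p) * ‖z‖ ^ 2))
  refine exists_hasDerivAt_energy_le htpos hα.le hβ.le hp.1.le hq.1.le (hq.1.le.trans hr.1)
    hlam.le hE (hx t ht₀t) (hx''g ▸ hx''t)
    (hΦ _ (fun i => hasDerivAt_regularized_sub z htpos (hdiff i _) (hx t ht₀t)) i₀ hi₀)
    (hdescent _ (subset_convexHull ℝ _ ⟨i₀, rfl⟩))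
    (ciInf_regularized_sub_le_real_inner hconv (fun i => hdiff i _) _ z hg)

/-- For a trajectory solution `x` of (MTRIGS) with `q ∈ (0,1)`, `λ > 0`,
`r ∈ [q,1)`, `z ∈ H`, the energy `E` satisfies, with `μ_r(t) = λ/t^r − 2r/t`, for a.e.
`t ≥ t₁ := max((2r/λ)^{1/(1−r)}, t₀)`:
`E'(t) + μ_r(t)E(t) ≤ t^r((3/2)λ − α t^{r−q})‖ẋ(t)‖² + (pβ t^{2r}/(2t^{p+1}))‖z‖²
+ (λ/2)(3λr/t − λ²/t^r + λα/t^q − β/t^{p−r})‖x(t)−z‖²`. -/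
theorem stmt_13
    {H : Type*} [NormedAddCommGroup H] [InnerProductSpace ℝ H] [CompleteSpace H]
    {m : ℕ} (hm : 0 < m) (f : Fin m → H → ℝ)
    (hconv : ∀ i, ConvexOn ℝ Set.univ (f i))
    (hdiff : ∀ i, Differentiable ℝ (f i))
    (hlip : ∀ i, ∃ L : ℝ≥0, LipschitzWith L (gradient (f i)))
    (t₀ α β q p : ℝ) (ht₀ : 0 < t₀) (hα : 0 < α) (hβ : 0 < β)
    (hq : q ∈ Set.Ioo (0:ℝ) 1) (hp : p ∈ Set.Ioc (0:ℝ) 2)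
    (x x' x'' : ℝ → H)
    (hx : ∀ t ∈ Set.Ici t₀, HasDerivAt x (x' t) t)
    (hx'c : ContinuousOn x' (Set.Ici t₀))
    (hx''m : StronglyMeasurable x'')
    (hx'int : ∀ t ∈ Set.Ici t₀, x' t = x' t₀ + ∫ s in t₀..t, x'' s)
    (hx'' : ∀ᵐ t ∂(volume.restrict (Set.Ici t₀)), HasDerivAt x' (x'' t) t)
    (hMTRIGS : ∀ᵐ t ∂(volume.restrict (Set.Ici t₀)),
      ((-(α / t ^ q)) • x' t ∈
        (fun g => g + (β / t ^ p) • x t + x'' t) ''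
          (convexHull ℝ (Set.range fun i => gradient (f i) (x t)))) ∧
      (∀ w ∈ (fun g => g + (β / t ^ p) • x t + x'' t) ''
          (convexHull ℝ (Set.range fun i => gradient (f i) (x t))),
        ‖(α / t ^ q) • x' t‖ ≤ ‖w‖))
    (lam : ℝ) (hlam : 0 < lam) (r : ℝ) (hr : r ∈ Set.Ico q 1) (z : H)
    (E : ℝ → ℝ)
    (hE : ∀ t : ℝ, E t =
      t ^ (2 * r) * (⨅ i, ((f i (x t) + β / (2 * t ^ p) * ‖x t‖ ^ 2)
          - (f i z + β / (2 * t ^ p) * ‖z‖ ^ 2)))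
        + (1/2) * ‖lam • (x t - z) + t ^ r • x' t‖ ^ 2
        + lam / 2 * (r * t ^ (r - 1) + α * t ^ (r - q) - 2 * lam) * ‖x t - z‖ ^ 2) :
    ∀ᵐ t ∂(volume.restrict (Set.Ici (max ((2 * r / lam) ^ ((1:ℝ) / (1 - r))) t₀))),
      ∃ d : ℝ, HasDerivAt E d t ∧
        d + (lam / t ^ r - 2 * r / t) * E t ≤
          t ^ r * (3 / 2 * lam - α * t ^ (r - q)) * ‖x' t‖ ^ 2
          + p * β * t ^ (2 * r) / (2 * t ^ (p + 1)) * ‖z‖ ^ 2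
          + lam / 2 * (3 * lam * r / t - lam ^ 2 / t ^ r + lam * α / t ^ q
              - β / t ^ (p - r)) * ‖x t - z‖ ^ 2 :=
  stmt_13_general hm f hconv hdiff t₀ α β q p ht₀ hα hβ hq hp x x' x'' hx hx'' hMTRIGS lam hlam r hr
    z E hE
end
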